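/- arXiv:1808.06300 — 5 statements merged into one kernel-verified Lean document; each statement's English description precedes it below -/
import Mathlib

section
/- Let f : [0,∞) → ℝ be continuously differentiable with limsup_{t→∞} f(t) = ∞. Then for every M > 0 there exist x > M and t ≥ 0 such that (a) f(s) < f(t) = x for all 0 ≤ s < t, and (b) f′(t) > 0. -/
/-!
By the one-dimensional Sard theorem the critical values of `f` form a null set, so there is a
regular value `c > max M (f 0)`, and `f` reaches `c` because it is unbounded above. At the first
time `t` with `f t = c`, `f` stays below `c` on `[0, t)`, so `f' t ≥ 0`; and `f' t ≠ 0` since `c`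
is a regular value.
-/

open Set Filter MeasureTheory

theorem volume_image_setOf_hasDerivWithinAt_eq_zero {f f' : ℝ → ℝ} {s : Set ℝ}
    (hf : ∀ x ∈ s, HasDerivWithinAt f (f' x) s x) :
    volume (f '' {x ∈ s | f' x = 0}) = 0 := by
  refine addHaar_image_eq_zero_of_det_fderivWithin_eq_zero volume
    (fun x hx ↦ ((hf x hx.1).hasFDerivWithinAt).mono (sep_subset s _)) fun x hx ↦ ?_
  simp [hx.2]

theorem exists_gt_notMem_image_setOf_hasDerivWithinAt_eq_zero {f f' : ℝ → ℝ} {s : Set ℝ}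
    (hf : ∀ x ∈ s, HasDerivWithinAt f (f' x) s x) (K : ℝ) :
    ∃ c > K, c ∉ f '' {x ∈ s | f' x = 0} := by
  obtain ⟨c, hcK, hc⟩ : (Ioi K \ f '' {x ∈ s | f' x = 0}).Nonempty := by
    refine nonempty_of_measure_ne_zero (μ := volume) ?_
    rw [measure_sdiff_null (volume_image_setOf_hasDerivWithinAt_eq_zero hf), Real.volume_Ioi]
    exact ENNReal.top_ne_zero
  exact ⟨c, hcK, hc⟩

theorem ContinuousOn.exists_first_eq_of_lt_of_le {f : ℝ → ℝ} {a b c : ℝ}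
    (hf : ContinuousOn f (Ici a)) (ha : f a < c) (hb : a ≤ b) (hcb : c ≤ f b) :
    ∃ t, a < t ∧ f t = c ∧ ∀ x ∈ Ico a t, f x < c := by
  have hivt : ∀ x, a ≤ x → c ≤ f x → ∃ y ∈ Icc a x, f y = c := fun x hx hcx ↦
    intermediate_value_Icc hx (hf.mono Icc_subset_Ici_self) ⟨ha.le, hcx⟩
  have hclosed : IsClosed (Icc a b ∩ f ⁻¹' {c}) :=
    (hf.mono Icc_subset_Ici_self).preimage_isClosed_of_isClosed isClosed_Icc isClosed_singleton
  obtain ⟨t, ⟨htab, htc⟩, hleast⟩ :=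
    (isCompact_Icc.of_isClosed_subset hclosed inter_subset_left).exists_isLeast
      (hivt b hb hcb)
  refine ⟨t, htab.1.lt_of_ne ?_, htc, fun x hx ↦ lt_of_not_ge fun hcx ↦ ?_⟩
  · rintro rfl
    exact ha.ne htc
  obtain ⟨y, hy, hyc⟩ := hivt x hx.1 hcx
  have hty : t ≤ y := hleast ⟨⟨hy.1, hy.2.trans (hx.2.le.trans htab.2)⟩, hyc⟩
  exact (hty.trans hy.2).not_gt hx.2

theorem HasDerivWithinAt.nonneg_of_isMaxOn_Ico {f : ℝ → ℝ} {f' a t : ℝ} {s : Set ℝ}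
    (hf : HasDerivWithinAt f f' s t) (hs : Ico a t ⊆ s) (hat : a < t)
    (hmax : IsMaxOn f (Ico a t) t) : 0 ≤ f' := by
  have hcone : a - t ∈ posTangentConeAt (Ico a t) t :=
    sub_mem_posTangentConeAt_of_openSegment_subset <| (openSegment_symm ℝ _ _).trans_subset
      ((openSegment_eq_Ioo hat).trans_subset Ioo_subset_Ico_self)
  have := hmax.localize.hasFDerivWithinAt_nonpos (hf.mono hs).hasFDerivWithinAt hcone
  simp only [ContinuousLinearMap.toSpanSingleton_apply, smul_eq_mul] at this
  exact nonneg_of_mul_nonpos_right this (sub_neg.2 hat)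

theorem statement0_general (f f' : ℝ → ℝ)
    (hderiv : ∀ t ∈ Set.Ici (0 : ℝ), HasDerivWithinAt f (f' t) (Set.Ici (0 : ℝ)) t)
    (hlimsup : ∀ C : ℝ, ∃ᶠ t in Filter.atTop, C < f t) :
    ∀ M > (0 : ℝ), ∃ x > M, ∃ t ≥ (0 : ℝ),
      (∀ s, 0 ≤ s → s < t → f s < f t) ∧ f t = x ∧ 0 < f' t := by
  intro M _
  obtain ⟨c, hc, hregular⟩ :=
    exists_gt_notMem_image_setOf_hasDerivWithinAt_eq_zero hderiv (max M (f 0))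
  obtain ⟨b, hcb, hb⟩ := ((hlimsup c).and_eventually (eventually_ge_atTop 0)).exists
  obtain ⟨t, ht, hftc, hbelow⟩ :=
    ContinuousOn.exists_first_eq_of_lt_of_le (fun x hx ↦ (hderiv x hx).continuousWithinAt)
      ((le_max_right _ _).trans_lt hc) hb hcb.le
  have hmax : IsMaxOn f (Ico 0 t) t := fun x hx ↦ (hftc ▸ hbelow x hx).le
  have hnonneg : 0 ≤ f' t :=
    (hderiv t ht.le).nonneg_of_isMaxOn_Ico Ico_subset_Ici_self ht hmax
  refine ⟨c, (le_max_left _ _).trans_lt hc, t, ht.le,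
    fun s hs hst ↦ hftc ▸ hbelow s ⟨hs, hst⟩, hftc, hnonneg.lt_of_ne' ?_⟩
  exact fun h ↦ hregular ⟨t, ⟨ht.le, h⟩, hftc⟩

/-- Let `f : [0,∞) → ℝ` be continuously differentiable (with derivative `f'`)
with `limsup_{t→∞} f(t) = ∞` (i.e. `f` frequently exceeds any level). Then for every `M > 0`
there exist `x > M` and `t ≥ 0` such that (a) `f(s) < f(t) = x` for all `0 ≤ s < t`, and
(b) `f'(t) > 0`. -/
theorem statement0 (f f' : ℝ → ℝ)
    (hderiv : ∀ t ∈ Set.Ici (0 : ℝ), HasDerivWithinAt f (f' t) (Set.Ici (0 : ℝ)) t)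
    (hcont : ContinuousOn f' (Set.Ici (0 : ℝ)))
    (hlimsup : ∀ C : ℝ, ∃ᶠ t in Filter.atTop, C < f t) :
    ∀ M > (0 : ℝ), ∃ x > M, ∃ t ≥ (0 : ℝ),
      (∀ s, 0 ≤ s → s < t → f s < f t) ∧ f t = x ∧ 0 < f' t :=
  statement0_general f f' hderiv hlimsup
end

section
/- Let u, g : [0,∞) → ℝ be continuously differentiable with u′(t) = (Ju)(t) for all t ≥ 0. If there is T such that g′(t) > (Jg)(t) for all t ≥ T, then sup_{t ≥ 0} (u(t) − g(t)) < ∞. Likewise, if there is T such that g′(t) < (Jg)(t) for all t ≥ T, then inf_{t ≥ 0} (u(t) − g(t)) > −∞. -/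
/-- The operator `J` from the paper: `(Jf)(t) = ∫₀¹ (f(t(1−x)) + 1 − f(t))⁺ dx`. -/
noncomputable def Jop (f : ℝ → ℝ) (t : ℝ) : ℝ :=
  ∫ x in (0 : ℝ)..1, max (f (t * (1 - x)) + 1 - f t) 0

private lemma Jop_integrand_contOn {f : ℝ → ℝ} {t : ℝ} (ht : 0 ≤ t)
    (hf : ContinuousOn f (Set.Ici 0)) :
    ContinuousOn (fun x => max (f (t * (1 - x)) + 1 - f t) 0) (Set.Icc (0:ℝ) 1) := by
  have hmap : Set.MapsTo (fun x : ℝ => t * (1 - x)) (Set.Icc 0 1) (Set.Ici 0) := by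
    intro x hx
    have : (0:ℝ) ≤ 1 - x := by linarith [hx.2]
    exact mul_nonneg ht this
  have hcomp : ContinuousOn (fun x => f (t * (1 - x))) (Set.Icc (0:ℝ) 1) :=
    hf.comp ((continuous_const.mul (continuous_const.sub continuous_id)).continuousOn) hmap
  exact fun x hx => (((hcomp.add continuousOn_const).sub continuousOn_const) x hx).max continuousWithinAt_const

private lemma Jop_le_Jop {a b : ℝ → ℝ} {t D : ℝ} (ht : 0 ≤ t)
    (hca : ContinuousOn a (Set.Ici 0)) (hcb : ContinuousOn b (Set.Ici 0))
    (hle : ∀ s ∈ Set.Icc 0 t, a s ≤ b s + D) (heq : a t = b t + D) :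
    Jop a t ≤ Jop b t := by
  unfold Jop
  have hia : IntervalIntegrable (fun x => max (a (t * (1 - x)) + 1 - a t) 0)
      MeasureTheory.volume 0 1 := by
    apply ContinuousOn.intervalIntegrable
    rw [Set.uIcc_of_le (by norm_num : (0:ℝ) ≤ 1)]
    exact Jop_integrand_contOn ht hca
  have hib : IntervalIntegrable (fun x => max (b (t * (1 - x)) + 1 - b t) 0)
      MeasureTheory.volume 0 1 := by
    apply ContinuousOn.intervalIntegrable
    rw [Set.uIcc_of_le (by norm_num : (0:ℝ) ≤ 1)]
    exact Jop_integrand_contOn ht hcb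
  apply intervalIntegral.integral_mono_on (by norm_num) hia hib
  intro x hx
  have hx1 : (0:ℝ) ≤ 1 - x := by linarith [hx.2]
  have hmem : t * (1 - x) ∈ Set.Icc 0 t := by
    constructor
    · exact mul_nonneg ht hx1
    · nlinarith [hx.1, hx.2]
  have h1 : a (t * (1 - x)) ≤ b (t * (1 - x)) + D := hle _ hmem
  exact max_le_max (by linarith) le_rfl

private lemma core (a a' b b' : ℝ → ℝ) (T : ℝ)
    (ha : ∀ t ∈ Set.Ici (0 : ℝ), HasDerivWithinAt a (a' t) (Set.Ici (0 : ℝ)) t)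
    (hb : ∀ t ∈ Set.Ici (0 : ℝ), HasDerivWithinAt b (b' t) (Set.Ici (0 : ℝ)) t)
    (key : ∀ t, T ≤ t → 0 ≤ t → a' t + Jop b t < b' t + Jop a t) :
    ∃ C : ℝ, ∀ t ≥ (0 : ℝ), a t - b t ≤ C := by
  have hca : ContinuousOn a (Set.Ici 0) := fun t ht => (ha t ht).continuousWithinAt
  have hcb : ContinuousOn b (Set.Ici 0) := fun t ht => (hb t ht).continuousWithinAt
  set φ : ℝ → ℝ := fun t => a t - b t with hφdef
  have hcφ : ContinuousOn φ (Set.Ici 0) := hca.sub hcb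
  set T' : ℝ := max T 0 with hT'
  have hT'0 : (0:ℝ) ≤ T' := le_max_right _ _
  -- maximum of φ on [0, T']
  obtain ⟨c, hc, hcmax⟩ := isCompact_Icc.exists_isMaxOn (Set.nonempty_Icc.mpr hT'0)
    (hcφ.mono (Set.Icc_subset_Ici_self))
  set B : ℝ := φ c with hB
  refine ⟨B + 1, ?_⟩
  by_contra hcon
  push_neg at hcon
  obtain ⟨t₁, ht₁0, ht₁⟩ := hcon
  set S : Set ℝ := Set.Icc 0 t₁ ∩ φ ⁻¹' (Set.Ici (B + 1)) with hS
  have hSclosed : IsClosed S :=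
    (hcφ.mono Set.Icc_subset_Ici_self).preimage_isClosed_of_isClosed isClosed_Icc isClosed_Ici
  have hSne : S.Nonempty := ⟨t₁, ⟨ht₁0, le_rfl⟩, le_of_lt ht₁⟩
  have hSbdd : BddBelow S := ⟨0, fun s hs => hs.1.1⟩
  set t₀ : ℝ := sInf S with ht₀def
  have ht₀S : t₀ ∈ S := hSclosed.csInf_mem hSne hSbdd
  have ht₀0 : 0 ≤ t₀ := ht₀S.1.1
  have ht₀1 : t₀ ≤ t₁ := ht₀S.1.2
  have hφt₀ : B + 1 ≤ φ t₀ := ht₀S.2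
  have ht₀T' : T' < t₀ := by
    by_contra hle
    push_neg at hle
    have : φ t₀ ≤ B := hcmax ⟨ht₀0, hle⟩
    linarith
  have ht₀pos : 0 < t₀ := lt_of_le_of_lt hT'0 ht₀T'
  -- t₀ is a maximum of φ on [0, t₀]
  have hmaxOn : ∀ s ∈ Set.Icc (0:ℝ) t₀, φ s ≤ φ t₀ := by
    intro s hs
    rcases eq_or_lt_of_le hs.2 with h | h
    · rw [h]
    · have hns : s ∉ S := fun hmem => absurd (csInf_le hSbdd hmem) (not_le.mpr h)
      have hs1 : s ∈ Set.Icc 0 t₁ := ⟨hs.1, le_trans hs.2 ht₀1⟩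
      have : ¬ (B + 1 ≤ φ s) := fun hss => hns ⟨hs1, hss⟩
      push_neg at this
      linarith
  -- the derivative of φ at t₀ is an honest derivative
  have hnhds : Set.Ici (0:ℝ) ∈ nhds t₀ := Ici_mem_nhds ht₀pos
  have hda : HasDerivAt a (a' t₀) t₀ := (ha t₀ (le_of_lt ht₀pos)).hasDerivAt hnhds
  have hdb : HasDerivAt b (b' t₀) t₀ := (hb t₀ (le_of_lt ht₀pos)).hasDerivAt hnhds
  have hdφ : HasDerivAt φ (a' t₀ - b' t₀) t₀ := hda.sub hdb
  -- the derivative is nonnegative (left difference quotients are nonnegative)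
  have hslope : Filter.Tendsto (slope φ t₀) (nhdsWithin t₀ (Set.Iio t₀))
      (nhds (a' t₀ - b' t₀)) :=
    (hasDerivAt_iff_tendsto_slope.mp hdφ).mono_left
      (nhdsWithin_mono _ (fun s hs => Set.mem_compl_singleton_iff.mpr (ne_of_lt hs)))
  have hev : ∀ᶠ s in nhdsWithin t₀ (Set.Iio t₀), 0 ≤ slope φ t₀ s := by
    filter_upwards [Ioo_mem_nhdsLT_of_mem (Set.mem_Ioc.mpr ⟨ht₀pos, le_rfl⟩)] with s hs
    have h1 : φ s - φ t₀ ≤ 0 := by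
      have := hmaxOn s ⟨le_of_lt hs.1, le_of_lt hs.2⟩
      linarith
    have h2 : s - t₀ ≤ 0 := by linarith [hs.2]
    rw [slope_def_field]
    exact div_nonneg_of_nonpos h1 h2
  have hderiv_nonneg : 0 ≤ a' t₀ - b' t₀ := ge_of_tendsto hslope hev
  -- compare the J operators at t₀
  have hJ : Jop a t₀ ≤ Jop b t₀ := by
    apply Jop_le_Jop (le_of_lt ht₀pos) hca hcb (D := φ t₀)
    · intro s hs
      have := hmaxOn s hs
      simp only [hφdef] at this ⊢
      linarith
    · simp only [hφdef]; ring
  have := key t₀ (le_trans (le_max_left T 0) (le_of_lt ht₀T')) (le_of_lt ht₀pos)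
  linarith

/-- Let `u, g : [0,∞) → ℝ` be continuously differentiable with `u′ = Ju` on
`[0,∞)`. If `g′(t) > (Jg)(t)` for all sufficiently large `t`, then
`sup_{t ≥ 0} (u(t) − g(t)) < ∞`; likewise if `g′(t) < (Jg)(t)` for all sufficiently large `t`,
then `inf_{t ≥ 0} (u(t) − g(t)) > −∞`. -/
theorem statement1 (u u' g g' : ℝ → ℝ)
    (hu : ∀ t ∈ Set.Ici (0 : ℝ), HasDerivWithinAt u (u' t) (Set.Ici (0 : ℝ)) t)
    (hu'c : ContinuousOn u' (Set.Ici (0 : ℝ)))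
    (hg : ∀ t ∈ Set.Ici (0 : ℝ), HasDerivWithinAt g (g' t) (Set.Ici (0 : ℝ)) t)
    (hg'c : ContinuousOn g' (Set.Ici (0 : ℝ)))
    (hueq : ∀ t ∈ Set.Ici (0 : ℝ), u' t = Jop u t) :
    ((∃ T : ℝ, ∀ t ≥ T, g' t > Jop g t) → ∃ C : ℝ, ∀ t ≥ (0 : ℝ), u t - g t ≤ C) ∧
    ((∃ T : ℝ, ∀ t ≥ T, g' t < Jop g t) → ∃ C : ℝ, ∀ t ≥ (0 : ℝ), C ≤ u t - g t) := by
  constructor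
  · rintro ⟨T, hT⟩
    exact core u u' g g' T hu hg (fun t hTt h0t => by
      have h1 := hueq t h0t
      have h2 := hT t hTt
      linarith)
  · rintro ⟨T, hT⟩
    obtain ⟨C, hC⟩ := core g g' u u' T hg hu (fun t hTt h0t => by
      have h1 := hueq t h0t
      have h2 := hT t hTt
      linarith)
    exact ⟨-C, fun t ht => by have := hC t ht; linarith⟩
end

section
/- The optimal value function u satisfies limsup_{t→∞} u(t)/√t ≤ √2. -/
open Set Filter Topology intervalIntegral

theorem integral_max_one_sub_mul_zero {k : ℝ} (hk : 1 ≤ k) :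
    ∫ x in (0 : ℝ)..1, max (1 - k * x) 0 = 1 / (2 * k) := by
  have hk0 : 0 < k := by linarith
  have hb0 : 0 ≤ k⁻¹ := inv_nonneg.2 hk0.le
  have hb1 : k⁻¹ ≤ 1 := inv_le_one_of_one_le₀ hk
  have hcont : Continuous fun x : ℝ => max (1 - k * x) 0 := by fun_prop
  rw [← integral_add_adjacent_intervals (b := k⁻¹)
    (hcont.intervalIntegrable _ _) (hcont.intervalIntegrable _ _)]
  have hleft : EqOn (fun x : ℝ => max (1 - k * x) 0) (fun x => 1 - k * x) (uIcc 0 k⁻¹) := by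
    intro x hx
    rw [uIcc_of_le hb0] at hx
    have : k * x ≤ 1 := by simpa [hk0.ne'] using mul_le_mul_of_nonneg_left hx.2 hk0.le
    exact max_eq_left (by linarith)
  have hright : EqOn (fun x : ℝ => max (1 - k * x) 0) (fun _ => 0) (uIcc k⁻¹ 1) := by
    intro x hx
    rw [uIcc_of_le hb1] at hx
    have : 1 ≤ k * x := by simpa [hk0.ne'] using mul_le_mul_of_nonneg_left hx.1 hk0.le
    exact max_eq_right (by linarith)
  rw [integral_congr hleft, integral_congr hright,
    integral_sub intervalIntegrable_const (intervalIntegrable_id.const_mul _),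
    integral_const_mul, integral_id]
  simp only [integral_const, integral_zero, smul_eq_mul]
  field_simp
  ring

theorem intervalIntegrable_Jop_integrand {f : ℝ → ℝ} {t : ℝ} (ht : 0 ≤ t)
    (hf : ContinuousOn f (Icc 0 t)) :
    IntervalIntegrable (fun x => max (f (t * (1 - x)) + 1 - f t) 0) MeasureTheory.volume 0 1 := by
  refine ContinuousOn.intervalIntegrable ?_
  have hmaps : MapsTo (fun x : ℝ => t * (1 - x)) (uIcc 0 1) (Icc 0 t) := by
    intro x hx
    rw [uIcc_of_le zero_le_one] at hx
    exact ⟨mul_nonneg ht (by linarith [hx.2]), by nlinarith [hx.1]⟩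
  exact (((hf.comp (by fun_prop) hmaps).add continuousOn_const).sub continuousOn_const).sup
    continuousOn_const

theorem Jop_nonneg (f : ℝ → ℝ) (t : ℝ) : 0 ≤ Jop f t :=
  integral_nonneg zero_le_one fun _ _ => le_max_right _ _

theorem Jop_mono {f g : ℝ → ℝ} {t : ℝ} (ht : 0 ≤ t) (hf : ContinuousOn f (Icc 0 t))
    (hg : ContinuousOn g (Icc 0 t)) (hfg : ∀ s ∈ Icc 0 t, f s - f t ≤ g s - g t) :
    Jop f t ≤ Jop g t := by
  refine integral_mono_on zero_le_one (intervalIntegrable_Jop_integrand ht hf)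
    (intervalIntegrable_Jop_integrand ht hg) fun x hx => max_le_max_right _ ?_
  have := hfg (t * (1 - x)) ⟨mul_nonneg ht (by linarith [hx.2]), by nlinarith [hx.1]⟩
  linarith

theorem Jop_const (c t : ℝ) : Jop (fun _ => c) t = 1 := by
  simp [Jop]

theorem Jop_const_mul {c t : ℝ} (h : 1 ≤ c * t) :
    Jop (fun s => c * s) t = 1 / (2 * (c * t)) := by
  rw [← integral_max_one_sub_mul_zero h, Jop]
  congr 1
  funext x
  ring_nf

theorem HasDerivWithinAt.nonneg_of_isMaxOn_Icc {f : ℝ → ℝ} {f' a b : ℝ} (hab : a < b)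
    (hf : HasDerivWithinAt f f' (Icc a b) b) (hmax : IsMaxOn f (Icc a b) b) : 0 ≤ f' := by
  have hcone : a - b ∈ posTangentConeAt (Icc a b) b :=
    sub_mem_posTangentConeAt_of_segment_subset ((convex_Icc a b).segment_subset
      (right_mem_Icc.2 hab.le) (left_mem_Icc.2 hab.le))
  have := hmax.localize.hasFDerivWithinAt_nonpos hf.hasFDerivWithinAt hcone
  simp only [ContinuousLinearMap.toSpanSingleton_apply, smul_eq_mul] at this
  nlinarith

theorem exists_first_nonneg {f : ℝ → ℝ} {a t : ℝ} (hf : ContinuousOn f (Ici a))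
    (ht : a ≤ t) (hft : 0 ≤ f t) : ∃ τ, a ≤ τ ∧ 0 ≤ f τ ∧ ∀ s ∈ Ico a τ, f s < 0 := by
  set A := Ici a ∩ f ⁻¹' Ici 0
  have hA : IsClosed A := hf.preimage_isClosed_of_isClosed isClosed_Ici isClosed_Ici
  have hbdd : BddBelow A := ⟨a, fun _ hx => hx.1⟩
  obtain ⟨hτa, hτ⟩ := hA.csInf_mem ⟨t, ht, hft⟩ hbdd
  refine ⟨sInf A, hτa, hτ, fun s hs => ?_⟩
  by_contra! hfs
  exact (csInf_le hbdd ⟨hs.1, hfs⟩).not_gt hs.2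

theorem sqrt_le_tangent {y z : ℝ} (hz : 0 < z) (hyz : 0 ≤ y + z) :
    √y ≤ √z + (y - z) / (2 * √z) := by
  have hsz : 0 < √z := Real.sqrt_pos.2 hz
  rw [← sub_le_iff_le_add', le_div_iff₀ (by positivity)]
  rcases le_or_gt y 0 with hy | hy
  · rw [Real.sqrt_eq_zero'.2 hy]
    nlinarith [Real.sq_sqrt hz.le]
  · nlinarith [Real.sq_sqrt hz.le, Real.sq_sqrt hy.le, sq_nonneg (√y - √z)]

theorem hasDerivAt_sqrt_two_mul_sub_one_add_one {t : ℝ} (ht : 1 / 2 < t) :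
    HasDerivAt (fun s => √(2 * s - 1) + 1) (√(2 * t - 1))⁻¹ t := by
  have h := ((((hasDerivAt_id' t).const_mul 2).sub_const 1).sqrt (by linarith)).add_const 1
  rwa [mul_one, div_mul_cancel_left₀ two_ne_zero] at h

theorem Jop_sqrt_two_mul_sub_one_add_one_lt {t : ℝ} (ht : 1 ≤ t) :
    Jop (fun s => √(2 * s - 1) + 1) t < (√(2 * t - 1))⁻¹ := by
  set a := √(2 * t - 1)
  have ha2 : a ^ 2 = 2 * t - 1 := Real.sq_sqrt (by linarith)
  have ha : 0 < a := Real.sqrt_pos.2 (by linarith)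
  have hat : 1 ≤ a⁻¹ * t := by
    rw [inv_mul_eq_div, one_le_div ha]
    nlinarith
  have hle : Jop (fun s => √(2 * s - 1) + 1) t ≤ Jop (fun s => a⁻¹ * s) t := by
    refine Jop_mono (by linarith) (by fun_prop) (by fun_prop) fun s hs => ?_
    have := sqrt_le_tangent (y := 2 * s - 1) (z := 2 * t - 1) (by linarith) (by linarith [hs.1])
    have e : (2 * s - 1 - (2 * t - 1)) / (2 * a) = a⁻¹ * s - a⁻¹ * t := by
      field_simp
      ring
    linarith
  have hval : 1 / (2 * (a⁻¹ * t)) = a / (2 * t) := by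
    field_simp
  rw [Jop_const_mul hat, hval] at hle
  refine hle.trans_lt ?_
  rw [div_lt_iff₀ (by positivity), inv_mul_eq_div, lt_div_iff₀ ha]
  nlinarith

theorem self_lt_sqrt_two_mul_sub_one_add_one {t : ℝ} (ht : t ∈ Icc (0 : ℝ) 2) :
    t < √(2 * t - 1) + 1 := by
  rcases lt_or_ge t 1 with h | h
  · linarith [Real.sqrt_nonneg (2 * t - 1)]
  · have : t - 1 < √(2 * t - 1) := by
      rw [Real.lt_sqrt (by linarith)]
      nlinarith [ht.2]
    linarith

structure IsJopSolution (u u' : ℝ → ℝ) : Prop where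
  hasDerivWithinAt : ∀ t ∈ Ici (0 : ℝ), HasDerivWithinAt u (u' t) (Ici 0) t
  deriv_eq : ∀ t ∈ Ici (0 : ℝ), u' t = Jop u t

namespace IsJopSolution

variable {u u' : ℝ → ℝ}

theorem continuousOn (hu : IsJopSolution u u') : ContinuousOn u (Ici 0) :=
  fun t ht => (hu.hasDerivWithinAt t ht).continuousWithinAt

theorem deriv_nonneg (hu : IsJopSolution u u') {t : ℝ} (ht : t ∈ Ici 0) : 0 ≤ u' t :=
  hu.deriv_eq t ht ▸ Jop_nonneg u t

theorem monotoneOn (hu : IsJopSolution u u') : MonotoneOn u (Ici 0) :=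
  monotoneOn_of_hasDerivWithinAt_nonneg (convex_Ici 0) hu.continuousOn
    (fun t ht => (hu.hasDerivWithinAt t (interior_subset ht)).mono interior_subset)
    (fun _ ht => hu.deriv_nonneg (interior_subset ht))

theorem deriv_le_one (hu : IsJopSolution u u') {t : ℝ} (ht : t ∈ Ici 0) : u' t ≤ 1 := by
  rw [hu.deriv_eq t ht, ← Jop_const 0 t]
  refine Jop_mono ht (hu.continuousOn.mono Icc_subset_Ici_self) continuousOn_const
    fun s hs => ?_
  linarith [hu.monotoneOn hs.1 ht hs.2]

theorem le_self (hu : IsJopSolution u u') (hu0 : u 0 = 0) {t : ℝ} (ht : t ∈ Ici 0) :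
    u t ≤ t := by
  have := (convex_Ici 0).norm_image_sub_le_of_norm_hasDerivWithin_le hu.hasDerivWithinAt
    (fun s hs => by rw [Real.norm_of_nonneg (hu.deriv_nonneg hs)]; exact hu.deriv_le_one hs)
    self_mem_Ici ht
  rw [hu0, sub_zero, sub_zero, one_mul, Real.norm_of_nonneg (mem_Ici.1 ht)] at this
  exact (le_abs_self _).trans this

theorem lt_of_supersolution (hu : IsJopSolution u u') {v v' : ℝ → ℝ} {T : ℝ} (hT : 0 ≤ T)
    (hv : ContinuousOn v (Ici 0)) (hinit : ∀ s ∈ Icc 0 T, u s < v s)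
    (hsuper : ∀ τ > T, HasDerivAt v (v' τ) τ ∧ Jop v τ < v' τ) {t : ℝ}
    (ht : t ∈ Ici 0) : u t < v t := by
  by_contra! hvt
  obtain ⟨τ, hτ0, hτ, hbefore⟩ :=
    exists_first_nonneg (f := u - v) (hu.continuousOn.sub hv) ht (sub_nonneg.2 hvt)
  have hTτ : T < τ := by
    by_contra! hτT
    exact (sub_nonneg.1 hτ).not_gt (hinit τ ⟨hτ0, hτT⟩)
  have hmax : IsMaxOn (u - v) (Icc 0 τ) τ := by
    refine isMaxOn_iff.2 fun s hs => ?_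
    rcases (hs.2 : s ≤ τ).lt_or_eq with hsτ | rfl
    · exact ((hbefore s ⟨hs.1, hsτ⟩).trans_le hτ).le
    · exact le_rfl
  have hJ : Jop u τ ≤ Jop v τ :=
    Jop_mono hτ0 (hu.continuousOn.mono Icc_subset_Ici_self) (hv.mono Icc_subset_Ici_self)
      fun s hs => by linarith [show u s - v s ≤ u τ - v τ from hmax hs]
  obtain ⟨hv', hJv⟩ := hsuper τ hTτ
  have hderiv : HasDerivWithinAt (u - v) (u' τ - v' τ) (Icc 0 τ) τ :=
    ((hu.hasDerivWithinAt τ hτ0).sub hv'.hasDerivWithinAt).mono Icc_subset_Ici_self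
  have hderiv_nonneg := hderiv.nonneg_of_isMaxOn_Icc (hT.trans_lt hTτ) hmax
  linarith [hu.deriv_eq τ hτ0]

theorem lt_sqrt_two_mul_sub_one_add_one (hu : IsJopSolution u u') (hu0 : u 0 = 0) {t : ℝ}
    (ht : t ∈ Ici 0) : u t < √(2 * t - 1) + 1 :=
  hu.lt_of_supersolution zero_le_two (by fun_prop)
    (fun s hs => (hu.le_self hu0 hs.1).trans_lt (self_lt_sqrt_two_mul_sub_one_add_one hs))
    (fun τ hτ => ⟨hasDerivAt_sqrt_two_mul_sub_one_add_one (by linarith),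
      Jop_sqrt_two_mul_sub_one_add_one_lt (by linarith)⟩) ht

end IsJopSolution

theorem statement2_general (u u' : ℝ → ℝ)
    (hderiv : ∀ t ∈ Set.Ici (0 : ℝ), HasDerivWithinAt u (u' t) (Set.Ici (0 : ℝ)) t)
    (hu0 : u 0 = 0)
    (heq : ∀ t ∈ Set.Ici (0 : ℝ), u' t = Jop u t) :
    ∀ ε > (0 : ℝ), ∀ᶠ t in Filter.atTop, u t / Real.sqrt t ≤ Real.sqrt 2 + ε := by
  have hu : IsJopSolution u u' := ⟨hderiv, heq⟩
  intro ε hε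
  have hsmall : ∀ᶠ t in atTop, (√t)⁻¹ < ε :=
    (tendsto_inv_atTop_zero.comp Real.tendsto_sqrt_atTop).eventually (gt_mem_nhds hε)
  filter_upwards [hsmall, eventually_gt_atTop 0] with t hεt ht
  have hst : 0 < √t := Real.sqrt_pos.2 ht
  calc u t / √t ≤ (√2 * √t + 1) / √t := by
        refine div_le_div_of_nonneg_right ?_ hst.le
        rw [← Real.sqrt_mul zero_le_two]
        have hsqrt : √(2 * t - 1) ≤ √(2 * t) := Real.sqrt_le_sqrt (by linarith)
        linarith [hu.lt_sqrt_two_mul_sub_one_add_one hu0 (mem_Ici.2 ht.le)]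
    _ = √2 + (√t)⁻¹ := by field_simp
    _ ≤ √2 + ε := by linarith

/-- The optimal value function `u` (the C¹ solution of `u′ = Ju`, `u(0) = 0`)
satisfies `limsup_{t→∞} u(t)/√t ≤ √2`, i.e. for every `ε > 0`, eventually
`u(t)/√t ≤ √2 + ε`. -/
theorem statement2 (u u' : ℝ → ℝ)
    (hderiv : ∀ t ∈ Set.Ici (0 : ℝ), HasDerivWithinAt u (u' t) (Set.Ici (0 : ℝ)) t)
    (hcont : ContinuousOn u' (Set.Ici (0 : ℝ)))
    (hu0 : u 0 = 0)
    (heq : ∀ t ∈ Set.Ici (0 : ℝ), u' t = Jop u t) :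
    ∀ ε > (0 : ℝ), ∀ᶠ t in Filter.atTop, u t / Real.sqrt t ≤ Real.sqrt 2 + ε :=
  statement2_general u u' hderiv hu0 heq
end

section
/- Let û : [0,∞) → ℝ be continuously differentiable with û(0) = 0 and û′(t) = ∫₀^{min(√(2/t),1)} (û(t(1−x)) + 1 − û(t)) dx for all t > 0. Then û(t) = √(2t) − (1/12) log t + O(1) as t → ∞. -/
/-!
Write `δ = √(2 / t)` and `φ(s) = √(2s) - (log s) / 12`. A second-order expansion of `√(1 - x)`
and `log (1 - x)` shows that `φ` solves the equation up to `O(δ³)`: the error `e = û - φ`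
satisfies `e'(t) = ∫₀^δ (e(t(1-x)) - e(t)) dx + r(t)` with `|r(t)| ≤ 5δ³/12` for `t ≥ 8`.
With `e < M` on `[4, 8]`, the barrier `M + 2 - 2δ` is increasing with derivative
`δ³/2 > 5δ³/12`. At a first time where `e` reaches it, `e(t)` is the maximum of `e` over `[4, t]`,
so the integral term is `≤ 0` and `e` would grow more slowly than the barrier: hence `e` stays
below it, and likewise `-e`.
-/

open Set Real Filter Topology
open scoped Interval

/-- For `t ≥ 1` this is the paper's threshold `δ̂(t) = min(√(2/t), 1)`. -/
noncomputable def threshold (t : ℝ) : ℝ := √(2 / t)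

noncomputable def profile (s : ℝ) : ℝ := √(2 * s) - 1 / 12 * log s

noncomputable def incrementIntegral (u : ℝ → ℝ) (t : ℝ) : ℝ :=
  ∫ x in (0 : ℝ)..threshold t, (u (t * (1 - x)) - u t)

section threshold

variable {t : ℝ}

lemma threshold_pos (ht : 0 < t) : 0 < threshold t := sqrt_pos.2 (by positivity)

lemma mul_threshold_sq (ht : 0 < t) : t * threshold t ^ 2 = 2 := by
  rw [threshold, sq_sqrt (by positivity)]
  field_simp

lemma threshold_mul_sqrt (ht : 0 < t) : threshold t * √(2 * t) = 2 := by
  rw [threshold, ← sqrt_mul (by positivity), show 2 / t * (2 * t) = 2 ^ 2 by field_simp,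
    sqrt_sq zero_le_two]

lemma threshold_le_one (ht : 2 ≤ t) : threshold t ≤ 1 := by
  nlinarith [mul_threshold_sq (by linarith : 0 < t), threshold_pos (by linarith : 0 < t)]

lemma threshold_le_half (ht : 8 ≤ t) : threshold t ≤ 1 / 2 := by
  nlinarith [mul_threshold_sq (by linarith : 0 < t), threshold_pos (by linarith : 0 < t)]

lemma threshold_antitoneOn : AntitoneOn threshold (Ioi 0) := fun _ hs _ _ hst =>
  sqrt_le_sqrt (div_le_div_of_nonneg_left zero_le_two hs hst)

lemma hasDerivAt_threshold (ht : 0 < t) : HasDerivAt threshold (-(threshold t ^ 3 / 4)) t := by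
  have h := ((hasDerivAt_inv ht.ne').const_mul 2).sqrt (by positivity)
  simp only [← div_eq_mul_inv] at h
  refine h.congr_deriv ?_
  have hδ := threshold_pos ht
  have h2 := mul_threshold_sq ht
  change 2 * -(t ^ 2)⁻¹ / (2 * threshold t) = _
  field_simp
  nlinarith

lemma mem_Icc_mul_one_sub (ht : 8 ≤ t) {x : ℝ} (hx : x ∈ Icc 0 (threshold t)) :
    t * (1 - x) ∈ Icc 4 t := by
  have h2 := mul_threshold_sq (by linarith : 0 < t)
  have hδ := threshold_le_half ht
  constructor <;> nlinarith [hx.1, hx.2, threshold_pos (by linarith : 0 < t)]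

end threshold

lemma abs_sqrt_one_sub_sub_le {x : ℝ} (h0 : 0 ≤ x) (h1 : x ≤ 1 / 2) :
    |√(1 - x) - (1 - x / 2 - x ^ 2 / 8)| ≤ x ^ 3 / 8 := by
  have hs : √(1 - x) ^ 2 = 1 - x := sq_sqrt (by linarith)
  have hs0 : 0 ≤ √(1 - x) := sqrt_nonneg _
  have hs1 : √(1 - x) ≤ 1 := sqrt_le_one.mpr (by linarith)
  rw [abs_le]
  constructor <;> nlinarith [mul_nonneg h0 hs0, pow_nonneg h0 3, pow_nonneg h0 4,
    mul_nonneg (pow_nonneg h0 3) hs0]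

lemma abs_log_one_sub_add_le {x : ℝ} (h0 : 0 ≤ x) (h1 : x ≤ 1 / 2) :
    |log (1 - x) + x| ≤ 2 * x ^ 2 := by
  have hx : |x| = x := abs_of_nonneg h0
  have h := abs_log_sub_add_sum_range_le (x := x) (by rw [hx]; linarith) 1
  simp only [Finset.sum_range_one, zero_add, pow_one, Nat.cast_zero, div_one, hx] at h
  rw [add_comm]
  calc _ ≤ x ^ 2 / (1 - x) := h
    _ ≤ 2 * x ^ 2 := by rw [div_le_iff₀ (by linarith)]; nlinarith [sq_nonneg x]

lemma abs_integral_sqrt_log_sub_le {d : ℝ} (hd0 : 0 < d) (hd : d ≤ 1 / 2) :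
    |(∫ x in (0 : ℝ)..d, (2 / d * (√(1 - x) - 1) - log (1 - x) / 12)) + d
      - (d / 2 - d ^ 2 / 24)| ≤ 5 / 12 * d ^ 3 := by
  set g : ℝ → ℝ := fun x => 2 / d * (√(1 - x) - 1) - log (1 - x) / 12
  -- `p` agrees with `g` up to `O(x ^ 3 / d + x ^ 2)`, which integrates to `O(d ^ 3)`
  set p : ℝ → ℝ := fun x => (1 / 12 - 1 / d) * x - 1 / (4 * d) * x ^ 2
  have hp : ∫ x in (0 : ℝ)..d, p x = -(d / 2) - d ^ 2 / 24 := by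
    rw [intervalIntegral.integral_sub, intervalIntegral.integral_const_mul,
      intervalIntegral.integral_const_mul, integral_id, integral_pow]
    · field_simp
      ring
    all_goals apply Continuous.intervalIntegrable; fun_prop
  have hg_int : IntervalIntegrable g MeasureTheory.volume 0 d := by
    refine ContinuousOn.intervalIntegrable fun x hx => ?_
    rw [uIcc_of_le hd0.le] at hx
    have : 1 - x ≠ 0 := by linarith [hx.2]
    fun_prop (disch := assumption)
  have hp_int : IntervalIntegrable p MeasureTheory.volume 0 d :=
    Continuous.intervalIntegrable (by fun_prop) _ _
  have hbound : ∀ x ∈ Ι 0 d, ‖g x - p x‖ ≤ 5 / 12 * d ^ 2 := fun x hx => by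
    rw [uIoc_of_le hd0.le] at hx
    have h0 := hx.1.le
    have hs := abs_sqrt_one_sub_sub_le h0 (hx.2.trans hd)
    have hl := abs_log_one_sub_add_le h0 (hx.2.trans hd)
    have hx3 : x ^ 3 ≤ d ^ 3 := pow_le_pow_left₀ h0 hx.2 3
    have hx2 : x ^ 2 ≤ d ^ 2 := pow_le_pow_left₀ h0 hx.2 2
    have hsplit : g x - p x = 2 / d * (√(1 - x) - (1 - x / 2 - x ^ 2 / 8))
        - (log (1 - x) + x) / 12 := by simp only [g, p]; field_simp; ring
    rw [Real.norm_eq_abs, hsplit]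
    calc _ ≤ |2 / d * (√(1 - x) - (1 - x / 2 - x ^ 2 / 8))| + |(log (1 - x) + x) / 12| :=
          abs_sub _ _
      _ = 2 / d * |√(1 - x) - (1 - x / 2 - x ^ 2 / 8)| + |log (1 - x) + x| / 12 := by
          rw [abs_mul, abs_of_pos (by positivity : 0 < 2 / d), abs_div,
            abs_of_pos (by norm_num : (0 : ℝ) < 12)]
      _ ≤ 2 / d * (d ^ 3 / 8) + 2 * d ^ 2 / 12 := by gcongr <;> linarith
      _ = 5 / 12 * d ^ 2 := by field_simp; ring
  calc _ = ‖∫ x in (0 : ℝ)..d, (g x - p x)‖ := by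
        rw [intervalIntegral.integral_sub hg_int hp_int, hp, Real.norm_eq_abs]
        ring_nf
    _ ≤ 5 / 12 * d ^ 2 * |d - 0| := intervalIntegral.norm_integral_le_of_norm_le_const hbound
    _ = 5 / 12 * d ^ 3 := by rw [sub_zero, abs_of_pos hd0]; ring

section profile

variable {t : ℝ}

lemma hasDerivAt_profile {s : ℝ} (hs : 0 < s) :
    HasDerivAt profile (threshold s / 2 - threshold s ^ 2 / 24) s := by
  have h := (((hasDerivAt_id s).const_mul 2).sqrt (by positivity)).sub
    ((hasDerivAt_log hs.ne').const_mul (1 / 12))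
  have h1 : 2 * 1 / (2 * √(2 * s)) = threshold s / 2 := by
    have := threshold_mul_sqrt hs
    field_simp
    linarith
  have h2 : 1 / 12 * s⁻¹ = threshold s ^ 2 / 24 := by
    have := mul_threshold_sq hs
    field_simp
    linarith
  simp only [id, h1, h2] at h
  exact h

lemma continuousOn_profile : ContinuousOn profile (Ioi 0) := fun _ hs =>
  (hasDerivAt_profile hs).continuousAt.continuousWithinAt

lemma profile_mul_one_sub_sub (ht : 0 < t) {x : ℝ} (hx : x < 1) :
    profile (t * (1 - x)) - profile t = 2 / threshold t * (√(1 - x) - 1) - log (1 - x) / 12 := by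
  have h1 := threshold_mul_sqrt ht
  have hδ := threshold_pos ht
  rw [profile, profile, show 2 * (t * (1 - x)) = 2 * t * (1 - x) by ring,
    sqrt_mul (by positivity), log_mul ht.ne' (by linarith),
    show √(2 * t) = 2 / threshold t by field_simp; linarith]
  ring

end profile

section incrementIntegral

variable {u v : ℝ → ℝ} {t : ℝ}

lemma intervalIntegrable_increment (ht : 8 ≤ t) (hu : ContinuousOn u (Icc 4 t)) :
    IntervalIntegrable (fun x => u (t * (1 - x)) - u t) MeasureTheory.volume 0 (threshold t) := by
  refine ContinuousOn.intervalIntegrable ?_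
  rw [uIcc_of_le (threshold_pos (by linarith)).le]
  exact (hu.comp (by fun_prop) fun x hx => mem_Icc_mul_one_sub ht hx).sub continuousOn_const

lemma incrementIntegral_sub (ht : 8 ≤ t) (hu : ContinuousOn u (Icc 4 t))
    (hv : ContinuousOn v (Icc 4 t)) :
    incrementIntegral (fun s => u s - v s) t = incrementIntegral u t - incrementIntegral v t := by
  rw [incrementIntegral, incrementIntegral, incrementIntegral, ← intervalIntegral.integral_sub
    (intervalIntegrable_increment ht hu) (intervalIntegrable_increment ht hv)]
  congr 1 with x
  ring

lemma incrementIntegral_neg : incrementIntegral (fun s => -u s) t = -incrementIntegral u t := by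
  rw [incrementIntegral, incrementIntegral, ← intervalIntegral.integral_neg]
  congr 1 with x
  ring

lemma incrementIntegral_nonpos (ht : 8 ≤ t) (hmax : IsMaxOn u (Icc 4 t) t) :
    incrementIntegral u t ≤ 0 := by
  rw [incrementIntegral, ← neg_nonneg, ← intervalIntegral.integral_neg]
  exact intervalIntegral.integral_nonneg (threshold_pos (by linarith)).le fun x hx =>
    neg_nonneg.2 (sub_nonpos.2 (hmax (mem_Icc_mul_one_sub ht hx)))

lemma integral_add_one_sub_eq_incrementIntegral_add (ht : 8 ≤ t) (hu : ContinuousOn u (Icc 4 t)) :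
    ∫ x in (0 : ℝ)..min (threshold t) 1, (u (t * (1 - x)) + 1 - u t) =
      incrementIntegral u t + threshold t := by
  have hsplit : (fun x => u (t * (1 - x)) + 1 - u t) = fun x => (u (t * (1 - x)) - u t) + 1 := by
    ext x
    ring
  rw [min_eq_left (threshold_le_one (by linarith)), hsplit, intervalIntegral.integral_add
    (intervalIntegrable_increment ht hu) intervalIntegrable_const, intervalIntegral.integral_const,
    incrementIntegral, sub_zero, smul_eq_mul, mul_one]

lemma abs_incrementIntegral_profile_sub_le (ht : 8 ≤ t) :
    |incrementIntegral profile t + threshold t - (threshold t / 2 - threshold t ^ 2 / 24)| ≤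
      5 / 12 * threshold t ^ 3 := by
  have hδ := threshold_le_half ht
  convert abs_integral_sqrt_log_sub_le (threshold_pos (by linarith)) hδ using 4
  refine intervalIntegral.integral_congr fun x hx => ?_
  rw [uIcc_of_le (threshold_pos (by linarith)).le] at hx
  exact profile_mul_one_sub_sub (by linarith) (by linarith [hx.2])

end incrementIntegral

theorem lt_of_deriv_lt_at_first_touch {f g f' g' : ℝ → ℝ} {a T : ℝ} (haT : a ≤ T)
    (hf : ∀ t ∈ Ici a, HasDerivWithinAt f (f' t) (Ici a) t)
    (hg : ∀ t ∈ Ici a, HasDerivWithinAt g (g' t) (Ici a) t)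
    (hinit : ∀ t ∈ Icc a T, f t < g t)
    (htouch : ∀ t, T < t → (∀ s ∈ Icc a t, f s ≤ g s) → f t = g t → f' t < g' t) :
    ∀ t ∈ Ici a, f t < g t := by
  by_contra! hbad
  set S := Ici a ∩ (fun t => f t - g t) ⁻¹' Ici 0
  have hderiv : ∀ t ∈ Ici a, HasDerivWithinAt (fun t => f t - g t) (f' t - g' t) (Ici a) t :=
    fun t ht => (hf t ht).sub (hg t ht)
  have hS : IsClosed S := ContinuousOn.preimage_isClosed_of_isClosed
    (fun t ht => (hderiv t ht).continuousWithinAt) isClosed_Ici isClosed_Ici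
  have hbdd : BddBelow S := ⟨a, fun s hs => hs.1⟩
  obtain ⟨hca, hc⟩ : sInf S ∈ S :=
    hS.csInf_mem (by obtain ⟨t, ht, h⟩ := hbad; exact ⟨t, ht, sub_nonneg.2 h⟩) hbdd
  set c := sInf S
  have hbefore : ∀ s ∈ Ico a c, f s - g s < 0 := fun s hs => by
    by_contra! h
    exact (csInf_le hbdd ⟨hs.1, h⟩).not_gt hs.2
  have hTc : T < c := by
    by_contra! h
    exact (sub_neg.2 (hinit c ⟨hca, h⟩)).not_ge hc
  have hac : a < c := haT.trans_lt hTc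
  have := right_nhdsWithin_Ico_neBot hac
  have htouch_c : f c = g c := by
    have := ((hderiv c hca).continuousWithinAt.mono Ico_subset_Ici_self).closure_le
      (by rw [closure_Ico hac.ne]; exact right_mem_Icc.2 hac.le) continuousWithinAt_const
      fun s hs => (hbefore s hs).le
    exact sub_eq_zero.1 (le_antisymm this hc)
  have hslope : Tendsto (slope (fun t => f t - g t) c) (𝓝[Ico a c] c) (𝓝 (f' c - g' c)) :=
    (hasDerivWithinAt_iff_tendsto_slope.mp (hderiv c hca)).mono_left
      (nhdsWithin_mono c fun s (hs : s ∈ Ico a c) => ⟨hs.1, hs.2.ne⟩)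
  -- `f - g` rises to `0` at `c` from negative values, so its left slopes there are positive
  have hslope_nonneg : 0 ≤ f' c - g' c := ge_of_tendsto hslope <|
    eventually_nhdsWithin_of_forall fun s hs => by
      rw [slope_def_field, htouch_c, sub_self, sub_zero]
      exact (div_pos_of_neg_of_neg (hbefore s hs) (sub_neg.2 hs.2)).le
  have hle : ∀ s ∈ Icc a c, f s ≤ g s := fun s hs =>
    (eq_or_lt_of_le hs.2).elim (fun h => h ▸ htouch_c.le)
      fun h => (sub_neg.1 (hbefore s ⟨hs.1, h⟩)).le
  exact (sub_nonneg.1 hslope_nonneg).not_gt (htouch c hTc hle htouch_c)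

theorem lt_add_two_sub_two_mul_threshold {e e' : ℝ → ℝ} {M : ℝ}
    (he : ∀ t ∈ Ici (4 : ℝ), HasDerivWithinAt e (e' t) (Ici 4) t)
    (he' : ∀ t, 8 ≤ t → e' t ≤ incrementIntegral e t + 5 / 12 * threshold t ^ 3)
    (hM : ∀ t ∈ Icc (4 : ℝ) 8, e t < M) :
    ∀ t ∈ Ici (4 : ℝ), e t < M + 2 - 2 * threshold t := by
  have hbarrier : ∀ t ∈ Ici (4 : ℝ), HasDerivWithinAt (fun s => M + 2 - 2 * threshold s)
      (-(2 * -(threshold t ^ 3 / 4))) (Ici 4) t := fun t ht =>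
    (((hasDerivAt_threshold (by linarith [mem_Ici.1 ht])).const_mul 2).const_sub _).hasDerivWithinAt
  refine lt_of_deriv_lt_at_first_touch (T := 8) (by norm_num) he hbarrier
    (fun t ht => by linarith [hM t ht, threshold_le_one (by linarith [ht.1] : 2 ≤ t)])
    fun t ht hle htouch => ?_
  have hmax : IsMaxOn e (Icc 4 t) t := fun s hs => by
    have := threshold_antitoneOn (mem_Ioi.2 (by linarith [hs.1])) (mem_Ioi.2 (by linarith)) hs.2
    show e s ≤ e t
    linarith [hle s hs]
  have hδ := threshold_pos (by linarith : 0 < t)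
  calc e' t ≤ incrementIntegral e t + 5 / 12 * threshold t ^ 3 := he' t ht.le
    _ ≤ 5 / 12 * threshold t ^ 3 := by linarith [incrementIntegral_nonpos ht.le hmax]
    _ < -(2 * -(threshold t ^ 3 / 4)) := by nlinarith [pow_pos hδ 3]

theorem statement11_general (uhat uhat' : ℝ → ℝ)
    (hderiv : ∀ t ∈ Set.Ici (0 : ℝ), HasDerivWithinAt uhat (uhat' t) (Set.Ici (0 : ℝ)) t)
    (heq : ∀ t > (0 : ℝ), uhat' t =
      ∫ x in (0 : ℝ)..(min (Real.sqrt (2 / t)) 1), (uhat (t * (1 - x)) + 1 - uhat t)) :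
    ∃ C T : ℝ, ∀ t ≥ T, |uhat t - (Real.sqrt (2 * t) - (1 / 12) * Real.log t)| ≤ C := by
  set e := fun s => uhat s - profile s
  have hu : ∀ t, ContinuousOn uhat (Icc 4 t) := fun t s hs =>
    (hderiv s (by linarith [hs.1] : (0 : ℝ) ≤ s)).continuousWithinAt.mono
      fun r hr => (by linarith [hr.1] : (0 : ℝ) ≤ r)
  have hφ : ∀ t, ContinuousOn profile (Icc 4 t) := fun t =>
    continuousOn_profile.mono fun s hs => (by linarith [hs.1] : (0 : ℝ) < s)
  have he : ∀ t ∈ Ici (4 : ℝ), HasDerivWithinAt e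
      (uhat' t - (threshold t / 2 - threshold t ^ 2 / 24)) (Ici 4) t := fun t ht =>
    ((hderiv t (Ici_subset_Ici.2 (by norm_num) ht)).mono (Ici_subset_Ici.2 (by norm_num))).sub
      (hasDerivAt_profile (by linarith [mem_Ici.1 ht])).hasDerivWithinAt
  have hdrift : ∀ t, 8 ≤ t → |uhat' t - (threshold t / 2 - threshold t ^ 2 / 24)
      - incrementIntegral e t| ≤ 5 / 12 * threshold t ^ 3 := fun t ht => by
    rw [(heq t (by linarith)).trans (integral_add_one_sub_eq_incrementIntegral_add ht (hu t)),
      incrementIntegral_sub ht (hu t) (hφ t)]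
    convert abs_incrementIntegral_profile_sub_le ht using 2
    ring
  obtain ⟨M, hM⟩ := isCompact_Icc.exists_bound_of_continuousOn ((hu 8).sub (hφ 8))
  have hupper := lt_add_two_sub_two_mul_threshold he
    (fun t ht => by linarith [(abs_le.1 (hdrift t ht)).2])
    (fun t ht => (le_abs_self _).trans_lt ((hM t ht).trans_lt (lt_add_one M)))
  have hlower := lt_add_two_sub_two_mul_threshold (e := fun s => -e s) (fun t ht => (he t ht).neg)
    (fun t ht => by rw [incrementIntegral_neg]; linarith [(abs_le.1 (hdrift t ht)).1])
    (fun t ht => (neg_le_abs _).trans_lt ((hM t ht).trans_lt (lt_add_one M)))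
  refine ⟨M + 3, 8, fun t ht => (abs_le.2 ⟨?_, ?_⟩ : |e t| ≤ M + 3)⟩
  · linarith [hlower t (mem_Ici.2 (by linarith)), threshold_pos (by linarith : 0 < t)]
  · linarith [hupper t (mem_Ici.2 (by linarith)), threshold_pos (by linarith : 0 < t)]

/-- Let `û : [0,∞) → ℝ` be continuously differentiable with `û(0) = 0` and
`û′(t) = ∫₀^{min(√(2/t),1)} (û(t(1−x)) + 1 − û(t)) dx` for all `t > 0` (the value function of
the self-similar policy with threshold `min(√(2/t),1)`). Then
`û(t) = √(2t) − (1/12) log t + O(1)` as `t → ∞`. -/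
theorem statement11 (uhat uhat' : ℝ → ℝ)
    (hderiv : ∀ t ∈ Set.Ici (0 : ℝ), HasDerivWithinAt uhat (uhat' t) (Set.Ici (0 : ℝ)) t)
    (hcont : ContinuousOn uhat' (Set.Ici (0 : ℝ)))
    (hu0 : uhat 0 = 0)
    (heq : ∀ t > (0 : ℝ), uhat' t =
      ∫ x in (0 : ℝ)..(min (Real.sqrt (2 / t)) 1), (uhat (t * (1 - x)) + 1 - uhat t)) :
    ∃ C T : ℝ, ∀ t ≥ T, |uhat t - (Real.sqrt (2 * t) - (1 / 12) * Real.log t)| ≤ C :=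
  statement11_general uhat uhat' hderiv heq
end

section
/- Fix α > 0 and let w : [0,∞) → ℝ be continuously differentiable with w(0) = 0 and w′(t) = ∫₀^{min(α/√t,1)} (w(t(1−x)) + 1 − w(t)) dx for all t > 0. Then w(t) ~ (4α/(2 + α²)) √t as t → ∞; in particular the constant 4α/(2 + α²) is maximal, equal to √2, exactly when α = √2. -/
open Filter Real Set intervalIntegral Topology

lemma aux_no_cross (h : ℝ → ℝ) (d t0 t1 : ℝ) (ht : t0 < t1) (hd : HasDerivAt h d t1)
    (hneg : d < 0) (hlt : ∀ u, t0 < u → u < t1 → h u < 0) (h1 : 0 ≤ h t1) : False := by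
  have hslope : Tendsto (slope h t1) (𝓝[<] t1) (𝓝 d) :=
    (hasDerivAt_iff_tendsto_slope.1 hd).mono_left
      (nhdsWithin_mono _ fun x hx => ne_of_lt hx)
  have hev : ∀ᶠ u in 𝓝[<] t1, 0 ≤ slope h t1 u := by
    filter_upwards [Ioo_mem_nhdsLT ht] with u hu
    have hnum : h u - h t1 < 0 := by have := hlt u hu.1 hu.2; linarith
    have hden : u - t1 < 0 := by linarith [hu.2]
    have : 0 < (h u - h t1) / (u - t1) := div_pos_of_neg_of_neg hnum hden
    rw [slope_def_field]
    linarith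
  exact absurd (ge_of_tendsto hslope hev) (not_le.2 hneg)

lemma aux_no_cross' (h : ℝ → ℝ) (d t0 t1 : ℝ) (ht : t0 < t1) (hd : HasDerivAt h d t1)
    (hpos : 0 < d) (hgt : ∀ u, t0 < u → u < t1 → 0 < h u) (h1 : h t1 ≤ 0) : False :=
  aux_no_cross (fun x => -h x) (-d) t0 t1 ht hd.neg (by linarith)
    (fun u h1 h2 => by simpa using hgt u h1 h2) (by simpa using h1)

lemma aux_sqrt_integral (a b : ℝ) (ha : 0 < a) (hab : a ≤ b) :
    ∫ u in a..b, Real.sqrt u = 2/3 * (b * Real.sqrt b) - 2/3 * (a * Real.sqrt a) := by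
  have key : ∀ u ∈ Set.uIcc a b, HasDerivAt (fun x => 2/3 * (x * Real.sqrt x)) (Real.sqrt u) u := by
    intro u hu
    have hu0 : 0 < u := lt_of_lt_of_le ha (by rw [Set.uIcc_of_le hab] at hu; exact hu.1)
    have h1 : HasDerivAt (fun x : ℝ => x * Real.sqrt x)
        (1 * Real.sqrt u + u * (1 / (2 * Real.sqrt u))) u :=
      (hasDerivAt_id u).mul (Real.hasDerivAt_sqrt hu0.ne')
    have h2 := h1.const_mul (2/3 : ℝ)
    refine h2.congr_deriv ?_
    have hs : Real.sqrt u * Real.sqrt u = u := Real.mul_self_sqrt hu0.le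
    have hs0 : Real.sqrt u ≠ 0 := (Real.sqrt_pos.2 hu0).ne'
    field_simp
    nlinarith [hs]
  exact intervalIntegral.integral_eq_sub_of_hasDerivAt key
    ((Real.continuous_sqrt.continuousOn).intervalIntegrable_of_Icc hab)

lemma aux_alg_upper (α c s d y t a W I : ℝ) (hs0 : 0 < s) (hss : s * s = t)
    (hsd : s * d = α) (hyy : y * y = 1 - d) (hadef : a = t * (1 - d))
    (hc4 : c * (2 + α ^ 2) = 4 * α) (hc0 : 0 < c) (hd0 : 0 < d)
    (hy0 : 0 ≤ y) (hy1 : y ≤ 1)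
    (hI : I ≤ (t - a) * (W - c * s) + c * (2/3 * (t * s) - 2/3 * (a * (s * y)))) :
    t⁻¹ * I + d * (1 - W) ≤ c / (2 * s) := by
  have ht0 : 0 < t := hss ▸ mul_pos hs0 hs0
  have hpoly : (2:ℝ)/3 * (1 - y^3) ≤ (1 - y^2) - (1 - y^2)^2/4 := by
    have hy' : 0 ≤ 1 - y := by linarith
    nlinarith [mul_nonneg (mul_nonneg (mul_nonneg hy' hy') hy') (by linarith : (0:ℝ) ≤ 3*y+1)]
  have hy2 : y ^ 2 = 1 - d := by rw [sq]; exact hyy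
  have hpoly' : (2:ℝ)/3 * (1 - y^3) ≤ d - d^2/4 := by rw [hy2] at hpoly; linarith
  have hpolys : c * s * t * ((2:ℝ)/3 * (1 - y^3)) ≤ c * s * t * (d - d^2/4) :=
    mul_le_mul_of_nonneg_left hpoly' (by positivity)
  have h1 : t * d = s * α := by rw [← hss, mul_assoc, hsd]
  have h2 : s * t * d ^ 2 = α ^ 2 * s := by
    rw [← hss]
    calc s * (s * s) * d ^ 2 = (s * d) * ((s * d) * s) := by ring
      _ = α * (α * s) := by rw [hsd]
      _ = α ^ 2 * s := by ring
  have h4 : α * s - c / 4 * (α ^ 2 * s) - c / 2 * s = 0 := by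
    linear_combination (-(s/4)) * hc4
  rw [← mul_le_mul_iff_of_pos_right ht0]
  have e0 : (t⁻¹ * I + d * (1 - W)) * t = I + d * (1 - W) * t := by field_simp
  have e2 : c / (2 * s) * t = c * s / 2 := by rw [← hss]; field_simp
  rw [e0, e2]
  calc I + d * (1 - W) * t
      ≤ ((t - a) * (W - c * s) + c * (2/3 * (t * s) - 2/3 * (a * (s * y)))) + d * (1 - W) * t := by
        linarith
    _ = c * s * t * ((2:ℝ)/3 * (1 - y^3)) - c * s * (t * d) + t * d := by
        rw [hadef, show d = 1 - y * y from by linarith]; ring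
    _ ≤ c * s * t * (d - d^2/4) - c * s * (t * d) + t * d := by linarith
    _ = -(c/4) * (s * t * d ^ 2) + t * d := by ring
    _ = -(c/4) * (α ^ 2 * s) + s * α := by rw [h2, h1]
    _ ≤ c * s / 2 := by linarith

lemma aux_alg_lower (α c s d y t a W I : ℝ) (hs0 : 0 < s) (hss : s * s = t)
    (hsd : s * d = α) (hyy : y * y = 1 - d) (hadef : a = t * (1 - d))
    (hc4 : c * (2 + α ^ 2) = 4 * α) (hc0 : 0 < c) (hd0 : 0 < d)
    (hy0 : 0 ≤ y) (hy1 : y ≤ 1)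
    (hI : (t - a) * (W - c * s) + c * (2/3 * (t * s) - 2/3 * (a * (s * y))) ≤ I) :
    c / (2 * s) - c * α ^ 3 / 8 / t ≤ t⁻¹ * I + d * (1 - W) := by
  have ht0 : 0 < t := hss ▸ mul_pos hs0 hs0
  have hpoly : (1 - y^2) - (1 - y^2)^2/4 - (1 - y^2)^3/8 ≤ (2:ℝ)/3 * (1 - y^3) := by
    have hy' : 0 ≤ 1 - y := by linarith
    nlinarith [mul_nonneg (mul_nonneg (mul_nonneg hy' hy') hy')
      (by positivity : (0:ℝ) ≤ 3*y^3 + 9*y^2 + 3*y + 1)]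
  have hy2 : y ^ 2 = 1 - d := by rw [sq]; exact hyy
  have hpoly' : d - d^2/4 - d^3/8 ≤ (2:ℝ)/3 * (1 - y^3) := by rw [hy2] at hpoly; linarith
  have hpolys : c * s * t * (d - d^2/4 - d^3/8) ≤ c * s * t * ((2:ℝ)/3 * (1 - y^3)) :=
    mul_le_mul_of_nonneg_left hpoly' (by positivity)
  have h1 : t * d = s * α := by rw [← hss, mul_assoc, hsd]
  have h2 : s * t * d ^ 2 = α ^ 2 * s := by
    rw [← hss]
    calc s * (s * s) * d ^ 2 = (s * d) * ((s * d) * s) := by ring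
      _ = α * (α * s) := by rw [hsd]
      _ = α ^ 2 * s := by ring
  have h3 : s * t * d ^ 3 = α ^ 3 := by
    rw [← hss]
    calc s * (s * s) * d ^ 3 = (s * d) * ((s * d) * (s * d)) := by ring
      _ = α * (α * α) := by rw [hsd]
      _ = α ^ 3 := by ring
  have h4 : α * s - c / 4 * (α ^ 2 * s) - c / 2 * s = 0 := by
    linear_combination (-(s/4)) * hc4
  rw [← mul_le_mul_iff_of_pos_right ht0]
  have e0 : (t⁻¹ * I + d * (1 - W)) * t = I + d * (1 - W) * t := by field_simp
  have e2 : (c / (2 * s) - c * α ^ 3 / 8 / t) * t = c * s / 2 - c * α ^ 3 / 8 := by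
    rw [← hss]; field_simp
  rw [e0, e2]
  calc c * s / 2 - c * α ^ 3 / 8
      = (-(c/4) * (α ^ 2 * s) + s * α) - (c/8) * (α ^ 3) := by linear_combination (-1 : ℝ) * h4
    _ = -(c/4) * (s * t * d ^ 2) - (c/8) * (s * t * d ^ 3) + t * d := by rw [h2, h1, h3]; ring
    _ = c * s * t * (d - d^2/4 - d^3/8) - c * s * (t * d) + t * d := by ring
    _ ≤ c * s * t * ((2:ℝ)/3 * (1 - y^3)) - c * s * (t * d) + t * d := by linarith
    _ = ((t - a) * (W - c * s) + c * (2/3 * (t * s) - 2/3 * (a * (s * y)))) + d * (1 - W) * t := by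
        rw [hadef, show d = 1 - y * y from by linarith]; ring
    _ ≤ I + d * (1 - W) * t := by linarith

lemma aux_wprime (w : ℝ → ℝ) (hw : ContinuousOn w (Set.Ici 0)) (α t : ℝ) (hα : 0 < α)
    (ht : α ^ 2 + 1 ≤ t) :
    (∫ x in (0:ℝ)..(min (α / Real.sqrt t) 1), (w (t * (1 - x)) + 1 - w t)) =
      t⁻¹ * (∫ u in (t * (1 - α / Real.sqrt t))..t, w u)
        + (α / Real.sqrt t) * (1 - w t) := by
  have ht0 : (0:ℝ) < t := by nlinarith
  have hs0 : 0 < Real.sqrt t := Real.sqrt_pos.2 ht0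
  set d : ℝ := α / Real.sqrt t with hd
  have hd0 : 0 < d := div_pos hα hs0
  have hd1 : d < 1 := by
    rw [hd, div_lt_one hs0]
    exact (Real.lt_sqrt hα.le).2 (by nlinarith)
  have hmin : min d 1 = d := min_eq_left hd1.le
  rw [hmin]
  have hmaps : ∀ x ∈ Set.uIcc (0:ℝ) d, t * (1 - x) ∈ Set.Ici (0:ℝ) := by
    intro x hx
    rw [Set.uIcc_of_le hd0.le] at hx
    have : x ≤ 1 := le_trans hx.2 hd1.le
    have : 0 ≤ 1 - x := by linarith
    exact mul_nonneg ht0.le this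
  have hI1 : IntervalIntegrable (fun x => w (t * (1 - x))) MeasureTheory.volume 0 d := by
    apply ContinuousOn.intervalIntegrable
    exact hw.comp (Continuous.continuousOn (by continuity)) hmaps
  have hI2 : IntervalIntegrable (fun _ : ℝ => 1 - w t) MeasureTheory.volume 0 d :=
    intervalIntegrable_const
  have hsplit : (∫ x in (0:ℝ)..d, (w (t * (1 - x)) + 1 - w t)) =
      (∫ x in (0:ℝ)..d, w (t * (1 - x))) + (∫ x in (0:ℝ)..d, (1 - w t)) := by
    rw [← intervalIntegral.integral_add hI1 hI2]
    congr 1; funext x; ring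
  rw [hsplit, intervalIntegral.integral_const, smul_eq_mul, sub_zero]
  congr 1
  · -- substitution
    have h1 : (∫ x in (0:ℝ)..d, w (t * (1 - x))) = ∫ x in (0:ℝ)..d, (fun y => w (t - y)) (t * x) := by
      congr 1; funext x; simp [mul_one_sub]
    rw [h1, intervalIntegral.integral_comp_mul_left (fun y => w (t - y)) ht0.ne',
      intervalIntegral.integral_comp_sub_left, smul_eq_mul]
    congr 1
    · rw [mul_zero, sub_zero, show t - t * d = t * (1 - d) from by ring]

section Est
variable (α c : ℝ) (w : ℝ → ℝ) (t : ℝ)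

lemma aux_est_upper (hα : 0 < α) (hc : c = 4 * α / (2 + α ^ 2))
    (hw : ContinuousOn w (Set.Ici 0)) (ht : α ^ 2 + 1 ≤ t)
    (hwin : ∀ u ∈ Set.Icc (t * (1 - α / Real.sqrt t)) t,
        w u - c * Real.sqrt u ≤ w t - c * Real.sqrt t) :
    (∫ x in (0:ℝ)..(min (α / Real.sqrt t) 1), (w (t * (1 - x)) + 1 - w t))
      ≤ c / (2 * Real.sqrt t) := by
  have ht0 : (0:ℝ) < t := by nlinarith
  have hs0 : 0 < Real.sqrt t := Real.sqrt_pos.2 ht0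
  have hss : Real.sqrt t * Real.sqrt t = t := Real.mul_self_sqrt ht0.le
  have hd0 : 0 < α / Real.sqrt t := div_pos hα hs0
  have hsd : Real.sqrt t * (α / Real.sqrt t) = α := by field_simp
  have hd1 : α / Real.sqrt t < 1 := by
    rw [div_lt_one hs0]
    exact (Real.lt_sqrt hα.le).2 (by nlinarith)
  have hyy : Real.sqrt (1 - α / Real.sqrt t) * Real.sqrt (1 - α / Real.sqrt t)
      = 1 - α / Real.sqrt t := Real.mul_self_sqrt (by linarith)
  have hy0 : 0 ≤ Real.sqrt (1 - α / Real.sqrt t) := Real.sqrt_nonneg _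
  have hy1 : Real.sqrt (1 - α / Real.sqrt t) ≤ 1 := Real.sqrt_le_one.2 (by linarith)
  have ha0 : 0 < t * (1 - α / Real.sqrt t) := mul_pos ht0 (by linarith)
  have hat : t * (1 - α / Real.sqrt t) ≤ t := by nlinarith
  have hsa : Real.sqrt (t * (1 - α / Real.sqrt t))
      = Real.sqrt t * Real.sqrt (1 - α / Real.sqrt t) := Real.sqrt_mul ht0.le _
  have hc0 : 0 < c := by rw [hc]; positivity
  have hc4 : c * (2 + α ^ 2) = 4 * α := by rw [hc]; field_simp
  have hsub : Set.uIcc (t * (1 - α / Real.sqrt t)) t ⊆ Set.Ici (0:ℝ) := by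
    rw [Set.uIcc_of_le hat]; exact fun x hx => le_trans ha0.le hx.1
  have hIw : IntervalIntegrable w MeasureTheory.volume (t * (1 - α / Real.sqrt t)) t :=
    (hw.mono hsub).intervalIntegrable
  have hIs : IntervalIntegrable (fun u => c * Real.sqrt u) MeasureTheory.volume
      (t * (1 - α / Real.sqrt t)) t :=
    ((continuous_const.mul Real.continuous_sqrt).continuousOn).intervalIntegrable
  have hIg : IntervalIntegrable (fun u => w u - c * Real.sqrt u) MeasureTheory.volume
      (t * (1 - α / Real.sqrt t)) t := hIw.sub hIs
  have hmono : (∫ u in (t * (1 - α / Real.sqrt t))..t, (w u - c * Real.sqrt u))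
      ≤ (t - t * (1 - α / Real.sqrt t)) * (w t - c * Real.sqrt t) := by
    have h1 := intervalIntegral.integral_mono_on hat hIg
      (_root_.intervalIntegrable_const (c := w t - c * Real.sqrt t)) hwin
    rw [intervalIntegral.integral_const, smul_eq_mul] at h1
    exact h1
  have hIsplit : (∫ u in (t * (1 - α / Real.sqrt t))..t, w u)
      = (∫ u in (t * (1 - α / Real.sqrt t))..t, (w u - c * Real.sqrt u))
        + c * (∫ u in (t * (1 - α / Real.sqrt t))..t, Real.sqrt u) := by
    rw [intervalIntegral.integral_sub hIw hIs, intervalIntegral.integral_const_mul]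
    ring
  have hI : (∫ u in (t * (1 - α / Real.sqrt t))..t, w u)
      ≤ (t - t * (1 - α / Real.sqrt t)) * (w t - c * Real.sqrt t)
        + c * (2/3 * (t * Real.sqrt t)
          - 2/3 * ((t * (1 - α / Real.sqrt t))
            * (Real.sqrt t * Real.sqrt (1 - α / Real.sqrt t)))) := by
    rw [hIsplit, aux_sqrt_integral _ _ ha0 hat, hsa]
    linarith
  rw [aux_wprime w hw α t hα ht]
  exact aux_alg_upper α c (Real.sqrt t) (α / Real.sqrt t)
    (Real.sqrt (1 - α / Real.sqrt t)) t (t * (1 - α / Real.sqrt t)) (w t) _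
    hs0 hss hsd hyy rfl hc4 hc0 hd0 hy0 hy1 hI
lemma aux_est_lower (hα : 0 < α) (hc : c = 4 * α / (2 + α ^ 2))
    (hw : ContinuousOn w (Set.Ici 0)) (ht : α ^ 2 + 1 ≤ t)
    (hwin : ∀ u ∈ Set.Icc (t * (1 - α / Real.sqrt t)) t,
        w t - c * Real.sqrt t ≤ w u - c * Real.sqrt u) :
    c / (2 * Real.sqrt t) - c * α ^ 3 / 8 / t
      ≤ (∫ x in (0:ℝ)..(min (α / Real.sqrt t) 1), (w (t * (1 - x)) + 1 - w t)) := by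
  have ht0 : (0:ℝ) < t := by nlinarith
  have hs0 : 0 < Real.sqrt t := Real.sqrt_pos.2 ht0
  have hss : Real.sqrt t * Real.sqrt t = t := Real.mul_self_sqrt ht0.le
  have hd0 : 0 < α / Real.sqrt t := div_pos hα hs0
  have hsd : Real.sqrt t * (α / Real.sqrt t) = α := by field_simp
  have hd1 : α / Real.sqrt t < 1 := by
    rw [div_lt_one hs0]
    exact (Real.lt_sqrt hα.le).2 (by nlinarith)
  have hyy : Real.sqrt (1 - α / Real.sqrt t) * Real.sqrt (1 - α / Real.sqrt t)
      = 1 - α / Real.sqrt t := Real.mul_self_sqrt (by linarith)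
  have hy0 : 0 ≤ Real.sqrt (1 - α / Real.sqrt t) := Real.sqrt_nonneg _
  have hy1 : Real.sqrt (1 - α / Real.sqrt t) ≤ 1 := Real.sqrt_le_one.2 (by linarith)
  have ha0 : 0 < t * (1 - α / Real.sqrt t) := mul_pos ht0 (by linarith)
  have hat : t * (1 - α / Real.sqrt t) ≤ t := by nlinarith
  have hsa : Real.sqrt (t * (1 - α / Real.sqrt t))
      = Real.sqrt t * Real.sqrt (1 - α / Real.sqrt t) := Real.sqrt_mul ht0.le _
  have hc0 : 0 < c := by rw [hc]; positivity
  have hc4 : c * (2 + α ^ 2) = 4 * α := by rw [hc]; field_simp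
  have hsub : Set.uIcc (t * (1 - α / Real.sqrt t)) t ⊆ Set.Ici (0:ℝ) := by
    rw [Set.uIcc_of_le hat]; exact fun x hx => le_trans ha0.le hx.1
  have hIw : IntervalIntegrable w MeasureTheory.volume (t * (1 - α / Real.sqrt t)) t :=
    (hw.mono hsub).intervalIntegrable
  have hIs : IntervalIntegrable (fun u => c * Real.sqrt u) MeasureTheory.volume
      (t * (1 - α / Real.sqrt t)) t :=
    ((continuous_const.mul Real.continuous_sqrt).continuousOn).intervalIntegrable
  have hIg : IntervalIntegrable (fun u => w u - c * Real.sqrt u) MeasureTheory.volume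
      (t * (1 - α / Real.sqrt t)) t := hIw.sub hIs
  have hmono : (t - t * (1 - α / Real.sqrt t)) * (w t - c * Real.sqrt t)
      ≤ (∫ u in (t * (1 - α / Real.sqrt t))..t, (w u - c * Real.sqrt u)) := by
    have h1 := intervalIntegral.integral_mono_on hat
      (_root_.intervalIntegrable_const (c := w t - c * Real.sqrt t)) hIg hwin
    rw [intervalIntegral.integral_const, smul_eq_mul] at h1
    exact h1
  have hIsplit : (∫ u in (t * (1 - α / Real.sqrt t))..t, w u)
      = (∫ u in (t * (1 - α / Real.sqrt t))..t, (w u - c * Real.sqrt u))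
        + c * (∫ u in (t * (1 - α / Real.sqrt t))..t, Real.sqrt u) := by
    rw [intervalIntegral.integral_sub hIw hIs, intervalIntegral.integral_const_mul]
    ring
  have hI : (t - t * (1 - α / Real.sqrt t)) * (w t - c * Real.sqrt t)
        + c * (2/3 * (t * Real.sqrt t)
          - 2/3 * ((t * (1 - α / Real.sqrt t))
            * (Real.sqrt t * Real.sqrt (1 - α / Real.sqrt t))))
      ≤ (∫ u in (t * (1 - α / Real.sqrt t))..t, w u) := by
    rw [hIsplit, aux_sqrt_integral _ _ ha0 hat, hsa]
    linarith
  rw [aux_wprime w hw α t hα ht]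
  exact aux_alg_lower α c (Real.sqrt t) (α / Real.sqrt t)
    (Real.sqrt (1 - α / Real.sqrt t)) t (t * (1 - α / Real.sqrt t)) (w t) _
    hs0 hss hsd hyy rfl hc4 hc0 hd0 hy0 hy1 hI
end Est

lemma aux_barrier_upper (α c : ℝ) (hα : 0 < α) (hc : c = 4 * α / (2 + α ^ 2)) (w w' : ℝ → ℝ)
    (hderiv : ∀ t ∈ Set.Ici (0 : ℝ), HasDerivWithinAt w (w' t) (Set.Ici (0 : ℝ)) t)
    (heq : ∀ t > (0 : ℝ), w' t =
      ∫ x in (0 : ℝ)..(min (α / Real.sqrt t) 1), (w (t * (1 - x)) + 1 - w t))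
    (M : ℝ)
    (hM : ∀ u ∈ Set.Icc (0:ℝ) (α ^ 2 + 1), w u - c * Real.sqrt u ≤ M) :
    ∀ t, α ^ 2 + 1 ≤ t →
      w t - c * Real.sqrt t ≤ M + 1 + Real.log (max t (α ^ 2 + 1) / (α ^ 2 + 1)) := by
  have ht00 : (0:ℝ) < α ^ 2 + 1 := by positivity
  obtain ⟨t0, ht0def⟩ : ∃ t0 : ℝ, t0 = α ^ 2 + 1 := ⟨_, rfl⟩
  rw [← ht0def] at hM ht00 ⊢
  obtain ⟨U, hUdef⟩ : ∃ U : ℝ → ℝ, U = fun t => M + 1 + Real.log (max t t0 / t0) := ⟨_, rfl⟩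
  have hUval : ∀ t, U t = M + 1 + Real.log (max t t0 / t0) := fun t => by rw [hUdef]
  have hwc : ContinuousOn w (Set.Ici 0) := fun t ht => (hderiv t ht).continuousWithinAt
  have hgc : ContinuousOn (fun t => w t - c * Real.sqrt t) (Set.Ici 0) :=
    hwc.sub ((continuous_const.mul Real.continuous_sqrt).continuousOn)
  have hUc : Continuous U := by
    rw [hUdef]
    apply continuous_const.add
    rw [continuous_iff_continuousAt]
    intro x
    apply (Real.continuousAt_log _).comp
    · exact ((continuous_id.max continuous_const).div_const t0).continuousAt
    · have : t0 ≤ max x t0 := le_max_right _ _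
      positivity
  have hUmono : ∀ ⦃u v : ℝ⦄, u ≤ v → U u ≤ U v := by
    intro u v huv
    rw [hUval u, hUval v]
    have h1 : max u t0 ≤ max v t0 := max_le_max huv le_rfl
    have h2 : (0:ℝ) < max u t0 / t0 := by
      have := le_max_right u t0; positivity
    exact add_le_add_right (Real.log_le_log h2 ((div_le_div_iff_of_pos_right ht00).2 h1)) _
  intro tt htt
  rw [← hUval tt]
  by_contra hcon
  push_neg at hcon
  set S : Set ℝ := Set.Ici t0 ∩ (fun t => (w t - c * Real.sqrt t) - U t) ⁻¹' Set.Ici 0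
    with hSdef
  have hSclosed : IsClosed S := by
    apply ContinuousOn.preimage_isClosed_of_isClosed _ isClosed_Ici isClosed_Ici
    exact (hgc.mono (Set.Ici_subset_Ici.2 ht00.le)).sub hUc.continuousOn
  have hSne : S.Nonempty := by
    refine ⟨tt, htt, ?_⟩
    simp only [Set.mem_preimage, Set.mem_Ici]
    linarith
  have hSbdd : BddBelow S := ⟨t0, fun x hx => hx.1⟩
  obtain ⟨t1, ht1def⟩ : ∃ t1 : ℝ, t1 = sInf S := ⟨_, rfl⟩
  have ht1S : t1 ∈ S := ht1def ▸ hSclosed.csInf_mem hSne hSbdd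
  have ht1 : t0 ≤ t1 := ht1S.1
  have hgU : U t1 ≤ w t1 - c * Real.sqrt t1 := by
    have h := ht1S.2
    simp only [Set.mem_preimage, Set.mem_Ici] at h
    linarith
  have ht1pos : (0:ℝ) < t1 := lt_of_lt_of_le ht00 ht1
  have hUt0 : U t0 = M + 1 := by
    rw [hUval t0, max_self, div_self ht00.ne', Real.log_one, add_zero]
  have ht1gt : t0 < t1 := by
    rcases lt_or_eq_of_le ht1 with h | h
    · exact h
    · exfalso
      have hgt0 : w t0 - c * Real.sqrt t0 ≤ M := hM t0 ⟨ht00.le, le_rfl⟩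
      rw [← h, hUt0] at hgU
      linarith
  have hbefore : ∀ u, t0 ≤ u → u < t1 → w u - c * Real.sqrt u < U u := by
    intro u h1 h2
    by_contra hle
    push_neg at hle
    have hmem : u ∈ S := ⟨h1, by simp only [Set.mem_preimage, Set.mem_Ici]; linarith⟩
    have := csInf_le hSbdd hmem
    rw [← ht1def] at this
    exact absurd this (not_le.2 h2)
  have hlogpos : 0 ≤ Real.log (max t1 t0 / t0) :=
    Real.log_nonneg ((one_le_div ht00).2 (le_max_right _ _))
  have hUt1 : M + 1 ≤ U t1 := by rw [hUval t1]; linarith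
  have hd1 : α / Real.sqrt t1 < 1 := by
    rw [div_lt_one (Real.sqrt_pos.2 ht1pos)]
    apply (Real.lt_sqrt hα.le).2
    rw [ht0def] at ht1
    nlinarith
  have ha0 : 0 ≤ t1 * (1 - α / Real.sqrt t1) := by nlinarith [ht1pos]
  have hwin : ∀ u ∈ Set.Icc (t1 * (1 - α / Real.sqrt t1)) t1,
      w u - c * Real.sqrt u ≤ w t1 - c * Real.sqrt t1 := by
    intro u hu
    have hu1 := hu.1
    have hu2 := hu.2
    have hu0 : (0:ℝ) ≤ u := le_trans ha0 hu1
    rcases le_or_gt u t0 with h | h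
    · have h5 := hM u ⟨hu0, h⟩
      linarith
    · rcases eq_or_lt_of_le hu2 with rfl | hlt
      · exact le_rfl
      · have h1 := hbefore u h.le hlt
        have h2 : U u ≤ U t1 := hUmono hu2
        linarith
  have West : w' t1 ≤ c / (2 * Real.sqrt t1) := by
    rw [heq t1 ht1pos]
    refine aux_est_upper α c w t1 hα hc hwc ?_ hwin
    rw [← ht0def]; exact ht1
  have hw_deriv : HasDerivAt w (w' t1) t1 :=
    (hderiv t1 ht1pos.le).hasDerivAt (Ici_mem_nhds ht1pos)
  have hs_deriv : HasDerivAt Real.sqrt (1 / (2 * Real.sqrt t1)) t1 :=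
    Real.hasDerivAt_sqrt ht1pos.ne'
  have hU_deriv : HasDerivAt U t1⁻¹ t1 := by
    have hEv : (fun t => M + 1 + (Real.log t - Real.log t0)) =ᶠ[𝓝 t1] U := by
      filter_upwards [isOpen_Ioi.mem_nhds ht1gt] with x hx
      have hx' : t0 < x := hx
      have hx0 : (0:ℝ) < x := lt_trans ht00 hx'
      rw [hUval x, max_eq_left hx'.le, Real.log_div hx0.ne' ht00.ne']
    have h0 : HasDerivAt (fun t => M + 1 + (Real.log t - Real.log t0)) t1⁻¹ t1 :=
      (((Real.hasDerivAt_log ht1pos.ne').sub_const _).const_add _)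
    exact h0.congr_of_eventuallyEq hEv.symm
  have hgU_deriv : HasDerivAt (fun t => (w t - c * Real.sqrt t) - U t)
      (w' t1 - c * (1 / (2 * Real.sqrt t1)) - t1⁻¹) t1 :=
    ((hw_deriv.sub (hs_deriv.const_mul c)).sub hU_deriv)
  have hneg : w' t1 - c * (1 / (2 * Real.sqrt t1)) - t1⁻¹ < 0 := by
    have e : c * (1 / (2 * Real.sqrt t1)) = c / (2 * Real.sqrt t1) := by ring
    rw [e]
    have h6 : (0:ℝ) < t1⁻¹ := inv_pos.2 ht1pos
    linarith
  exact aux_no_cross (fun t => (w t - c * Real.sqrt t) - U t) _ t0 t1 ht1gt hgU_deriv hneg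
    (fun u h1 h2 => sub_neg.2 (hbefore u h1.le h2)) (sub_nonneg.2 hgU)

lemma aux_barrier_lower (α c : ℝ) (hα : 0 < α) (hc : c = 4 * α / (2 + α ^ 2)) (w w' : ℝ → ℝ)
    (hderiv : ∀ t ∈ Set.Ici (0 : ℝ), HasDerivWithinAt w (w' t) (Set.Ici (0 : ℝ)) t)
    (heq : ∀ t > (0 : ℝ), w' t =
      ∫ x in (0 : ℝ)..(min (α / Real.sqrt t) 1), (w (t * (1 - x)) + 1 - w t))
    (m : ℝ)
    (hm : ∀ u ∈ Set.Icc (0:ℝ) (α ^ 2 + 1), m ≤ w u - c * Real.sqrt u) :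
    ∀ t, α ^ 2 + 1 ≤ t →
      m - 1 - (c * α ^ 3 / 8 + 1) * Real.log (max t (α ^ 2 + 1) / (α ^ 2 + 1))
        ≤ w t - c * Real.sqrt t := by
  have ht00 : (0:ℝ) < α ^ 2 + 1 := by positivity
  have hc0 : 0 < c := by rw [hc]; positivity
  have hC0 : 0 ≤ c * α ^ 3 / 8 := by positivity
  obtain ⟨t0, ht0def⟩ : ∃ t0 : ℝ, t0 = α ^ 2 + 1 := ⟨_, rfl⟩
  rw [← ht0def] at hm ht00 ⊢
  obtain ⟨L, hLdef⟩ : ∃ L : ℝ → ℝ,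
      L = fun t => m - 1 - (c * α ^ 3 / 8 + 1) * Real.log (max t t0 / t0) := ⟨_, rfl⟩
  have hLval : ∀ t, L t = m - 1 - (c * α ^ 3 / 8 + 1) * Real.log (max t t0 / t0) :=
    fun t => by rw [hLdef]
  have hwc : ContinuousOn w (Set.Ici 0) := fun t ht => (hderiv t ht).continuousWithinAt
  have hgc : ContinuousOn (fun t => w t - c * Real.sqrt t) (Set.Ici 0) :=
    hwc.sub ((continuous_const.mul Real.continuous_sqrt).continuousOn)
  have hLc : Continuous L := by
    rw [hLdef]
    apply continuous_const.sub
    apply continuous_const.mul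
    rw [continuous_iff_continuousAt]
    intro x
    apply (Real.continuousAt_log _).comp
    · exact ((continuous_id.max continuous_const).div_const t0).continuousAt
    · have : t0 ≤ max x t0 := le_max_right _ _
      positivity
  have hLmono : ∀ ⦃u v : ℝ⦄, u ≤ v → L v ≤ L u := by
    intro u v huv
    rw [hLval u, hLval v]
    have h1 : max u t0 ≤ max v t0 := max_le_max huv le_rfl
    have h2 : (0:ℝ) < max u t0 / t0 := by
      have := le_max_right u t0; positivity
    have h3 : Real.log (max u t0 / t0) ≤ Real.log (max v t0 / t0) :=
      Real.log_le_log h2 ((div_le_div_iff_of_pos_right ht00).2 h1)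
    nlinarith
  intro tt htt
  rw [← hLval tt]
  by_contra hcon
  push_neg at hcon
  set S : Set ℝ := Set.Ici t0 ∩ (fun t => L t - (w t - c * Real.sqrt t)) ⁻¹' Set.Ici 0
    with hSdef
  have hSclosed : IsClosed S := by
    apply ContinuousOn.preimage_isClosed_of_isClosed _ isClosed_Ici isClosed_Ici
    exact hLc.continuousOn.sub (hgc.mono (Set.Ici_subset_Ici.2 ht00.le))
  have hSne : S.Nonempty := by
    refine ⟨tt, htt, ?_⟩
    simp only [Set.mem_preimage, Set.mem_Ici]
    linarith
  have hSbdd : BddBelow S := ⟨t0, fun x hx => hx.1⟩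
  obtain ⟨t1, ht1def⟩ : ∃ t1 : ℝ, t1 = sInf S := ⟨_, rfl⟩
  have ht1S : t1 ∈ S := ht1def ▸ hSclosed.csInf_mem hSne hSbdd
  have ht1 : t0 ≤ t1 := ht1S.1
  have hgL : w t1 - c * Real.sqrt t1 ≤ L t1 := by
    have h := ht1S.2
    simp only [Set.mem_preimage, Set.mem_Ici] at h
    linarith
  have ht1pos : (0:ℝ) < t1 := lt_of_lt_of_le ht00 ht1
  have hLt0 : L t0 = m - 1 := by
    rw [hLval t0, max_self, div_self ht00.ne', Real.log_one, mul_zero, sub_zero]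
  have ht1gt : t0 < t1 := by
    rcases lt_or_eq_of_le ht1 with h | h
    · exact h
    · exfalso
      have hgt0 : m ≤ w t0 - c * Real.sqrt t0 := hm t0 ⟨ht00.le, le_rfl⟩
      rw [← h, hLt0] at hgL
      linarith
  have hbefore : ∀ u, t0 ≤ u → u < t1 → L u < w u - c * Real.sqrt u := by
    intro u h1 h2
    by_contra hle
    push_neg at hle
    have hmem : u ∈ S := ⟨h1, by simp only [Set.mem_preimage, Set.mem_Ici]; linarith⟩
    have := csInf_le hSbdd hmem
    rw [← ht1def] at this
    exact absurd this (not_le.2 h2)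
  have hlogpos : 0 ≤ Real.log (max t1 t0 / t0) :=
    Real.log_nonneg ((one_le_div ht00).2 (le_max_right _ _))
  have hLt1 : L t1 ≤ m - 1 := by rw [hLval t1]; nlinarith
  have hd1 : α / Real.sqrt t1 < 1 := by
    rw [div_lt_one (Real.sqrt_pos.2 ht1pos)]
    apply (Real.lt_sqrt hα.le).2
    rw [ht0def] at ht1
    nlinarith
  have ha0 : 0 ≤ t1 * (1 - α / Real.sqrt t1) := by nlinarith [ht1pos]
  have hwin : ∀ u ∈ Set.Icc (t1 * (1 - α / Real.sqrt t1)) t1,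
      w t1 - c * Real.sqrt t1 ≤ w u - c * Real.sqrt u := by
    intro u hu
    have hu1 := hu.1
    have hu2 := hu.2
    have hu0 : (0:ℝ) ≤ u := le_trans ha0 hu1
    rcases le_or_gt u t0 with h | h
    · have h5 := hm u ⟨hu0, h⟩
      linarith
    · rcases eq_or_lt_of_le hu2 with rfl | hlt
      · exact le_rfl
      · have h1 := hbefore u h.le hlt
        have h2 : L t1 ≤ L u := hLmono hu2
        linarith
  have West : c / (2 * Real.sqrt t1) - c * α ^ 3 / 8 / t1 ≤ w' t1 := by
    rw [heq t1 ht1pos]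
    refine aux_est_lower α c w t1 hα hc hwc ?_ hwin
    rw [← ht0def]; exact ht1
  have hw_deriv : HasDerivAt w (w' t1) t1 :=
    (hderiv t1 ht1pos.le).hasDerivAt (Ici_mem_nhds ht1pos)
  have hs_deriv : HasDerivAt Real.sqrt (1 / (2 * Real.sqrt t1)) t1 :=
    Real.hasDerivAt_sqrt ht1pos.ne'
  have hL_deriv : HasDerivAt L (-((c * α ^ 3 / 8 + 1) * t1⁻¹)) t1 := by
    have hEv : (fun t => (m - 1) - (c * α ^ 3 / 8 + 1) * (Real.log t - Real.log t0))
        =ᶠ[𝓝 t1] L := by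
      filter_upwards [isOpen_Ioi.mem_nhds ht1gt] with x hx
      have hx' : t0 < x := hx
      have hx0 : (0:ℝ) < x := lt_trans ht00 hx'
      rw [hLval x, max_eq_left hx'.le, Real.log_div hx0.ne' ht00.ne']
    have h0 : HasDerivAt (fun t => (m - 1) - (c * α ^ 3 / 8 + 1) * (Real.log t - Real.log t0))
        (-((c * α ^ 3 / 8 + 1) * t1⁻¹)) t1 :=
      ((((Real.hasDerivAt_log ht1pos.ne').sub_const _).const_mul _).const_sub _)
    exact h0.congr_of_eventuallyEq hEv.symm
  have hgL_deriv : HasDerivAt (fun t => (w t - c * Real.sqrt t) - L t)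
      (w' t1 - c * (1 / (2 * Real.sqrt t1)) - -((c * α ^ 3 / 8 + 1) * t1⁻¹)) t1 :=
    ((hw_deriv.sub (hs_deriv.const_mul c)).sub hL_deriv)
  have hpos : 0 < w' t1 - c * (1 / (2 * Real.sqrt t1)) - -((c * α ^ 3 / 8 + 1) * t1⁻¹) := by
    have e : c * (1 / (2 * Real.sqrt t1)) = c / (2 * Real.sqrt t1) := by ring
    have e2 : c * α ^ 3 / 8 / t1 = (c * α ^ 3 / 8) * t1⁻¹ := by ring
    have e3 : (c * α ^ 3 / 8 + 1) * t1⁻¹ = (c * α ^ 3 / 8) * t1⁻¹ + t1⁻¹ := by ring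
    have h6 : (0:ℝ) < t1⁻¹ := inv_pos.2 ht1pos
    rw [e, e3]
    rw [e2] at West
    linarith
  exact aux_no_cross' (fun t => (w t - c * Real.sqrt t) - L t) _ t0 t1 ht1gt hgL_deriv hpos
    (fun u h1 h2 => sub_pos.2 (hbefore u h1.le h2)) (sub_nonpos.2 hgL)

lemma aux_tendsto_bound (K C t0 : ℝ) (ht0 : 0 < t0) :
    Tendsto (fun t => (K + C * Real.log (max t t0 / t0)) / Real.sqrt t) atTop (𝓝 0) := by
  have hsqrt_at : Tendsto Real.sqrt atTop atTop := by
    have e : Real.sqrt = fun x : ℝ => x ^ ((1:ℝ)/2) := funext fun x => Real.sqrt_eq_rpow x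
    rw [e]
    exact tendsto_rpow_atTop (by norm_num)
  have hinv : Tendsto (fun t => (Real.sqrt t)⁻¹) atTop (𝓝 0) :=
    tendsto_inv_atTop_zero.comp hsqrt_at
  have hlog : Tendsto (fun t => Real.log t / Real.sqrt t) atTop (𝓝 0) := by
    have h := (isLittleO_log_rpow_atTop
      (by norm_num : (0:ℝ) < 1/2)).tendsto_div_nhds_zero
    simp only [← Real.sqrt_eq_rpow] at h
    exact h
  have h1 : Tendsto (fun t => K * (Real.sqrt t)⁻¹
      + (C * (Real.log t / Real.sqrt t) - (C * Real.log t0) * (Real.sqrt t)⁻¹)) atTop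
      (𝓝 (K * 0 + (C * 0 - (C * Real.log t0) * 0))) :=
    (hinv.const_mul K).add ((hlog.const_mul C).sub (hinv.const_mul _))
  rw [show K * 0 + (C * 0 - (C * Real.log t0) * 0) = 0 by ring] at h1
  apply h1.congr'
  filter_upwards [eventually_ge_atTop (max t0 1)] with t ht
  have ht1 : (1:ℝ) ≤ t := le_trans (le_max_right _ _) ht
  have htt0 : t0 ≤ t := le_trans (le_max_left _ _) ht
  have ht0' : (0:ℝ) < t := by linarith
  have hs : (0:ℝ) < Real.sqrt t := Real.sqrt_pos.2 ht0'
  rw [max_eq_left htt0, Real.log_div ht0'.ne' ht0.ne']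
  field_simp

/-- Fix `α > 0` and let `w : [0,∞) → ℝ` be continuously differentiable with
`w(0) = 0` and `w′(t) = ∫₀^{min(α/√t,1)} (w(t(1−x)) + 1 − w(t)) dx` for all `t > 0`
(the value function of the self-similar policy with threshold `min(α t^{−1/2},1)`). Then
`w(t) ~ (4α/(2+α²)) √t` as `t → ∞`; moreover the rate constant `4α/(2+α²)` is at most `√2`
for every `β > 0`, with the maximum `√2` attained exactly when `α = √2`. -/
theorem statement13 (α : ℝ) (hα : 0 < α) (w w' : ℝ → ℝ)
    (hderiv : ∀ t ∈ Set.Ici (0 : ℝ), HasDerivWithinAt w (w' t) (Set.Ici (0 : ℝ)) t)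
    (hcont : ContinuousOn w' (Set.Ici (0 : ℝ)))
    (hw0 : w 0 = 0)
    (heq : ∀ t > (0 : ℝ), w' t =
      ∫ x in (0 : ℝ)..(min (α / Real.sqrt t) 1), (w (t * (1 - x)) + 1 - w t)) :
    Filter.Tendsto (fun t => w t / Real.sqrt t) Filter.atTop
        (nhds (4 * α / (2 + α ^ 2))) ∧
      (∀ β > (0 : ℝ), 4 * β / (2 + β ^ 2) ≤ Real.sqrt 2) ∧
      (4 * α / (2 + α ^ 2) = Real.sqrt 2 ↔ α = Real.sqrt 2) := by
  have h2 : Real.sqrt 2 ^ 2 = 2 := Real.sq_sqrt (by norm_num)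
  refine ⟨?_, ?_, ?_⟩
  · -- the limit
    obtain ⟨c, hc⟩ : ∃ c : ℝ, c = 4 * α / (2 + α ^ 2) := ⟨_, rfl⟩
    rw [← hc]
    have ht00 : (0:ℝ) < α ^ 2 + 1 := by positivity
    have hwc : ContinuousOn w (Set.Ici 0) := fun t ht => (hderiv t ht).continuousWithinAt
    have hgc : ContinuousOn (fun t => w t - c * Real.sqrt t) (Set.Icc 0 (α ^ 2 + 1)) :=
      (hwc.sub ((continuous_const.mul Real.continuous_sqrt).continuousOn)).mono
        (fun x hx => hx.1)
    have hne : (Set.Icc (0:ℝ) (α ^ 2 + 1)).Nonempty := ⟨0, le_rfl, ht00.le⟩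
    obtain ⟨pM, _, hM'⟩ := isCompact_Icc.exists_isMaxOn hne hgc
    obtain ⟨pm, _, hm'⟩ := isCompact_Icc.exists_isMinOn hne hgc
    have hM : ∀ u ∈ Set.Icc (0:ℝ) (α ^ 2 + 1), w u - c * Real.sqrt u
        ≤ w pM - c * Real.sqrt pM := fun u hu => hM' hu
    have hm : ∀ u ∈ Set.Icc (0:ℝ) (α ^ 2 + 1), w pm - c * Real.sqrt pm
        ≤ w u - c * Real.sqrt u := fun u hu => hm' hu
    set M : ℝ := w pM - c * Real.sqrt pM with hMdef
    set m : ℝ := w pm - c * Real.sqrt pm with hmdef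
    have hup := aux_barrier_upper α c hα hc w w' hderiv heq M hM
    have hlo := aux_barrier_lower α c hα hc w w' hderiv heq m hm
    have key : Tendsto (fun t => (w t - c * Real.sqrt t) / Real.sqrt t) atTop (𝓝 0) := by
      apply tendsto_of_tendsto_of_tendsto_of_le_of_le'
        (aux_tendsto_bound (m - 1) (-(c * α ^ 3 / 8 + 1)) (α ^ 2 + 1) ht00)
        (aux_tendsto_bound (M + 1) 1 (α ^ 2 + 1) ht00)
      · filter_upwards [eventually_ge_atTop (α ^ 2 + 1)] with t ht
        have hs : (0:ℝ) < Real.sqrt t := Real.sqrt_pos.2 (by nlinarith)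
        have h := hlo t ht
        have e : (m - 1) + (-(c * α ^ 3 / 8 + 1)) * Real.log (max t (α ^ 2 + 1) / (α ^ 2 + 1))
            = m - 1 - (c * α ^ 3 / 8 + 1) * Real.log (max t (α ^ 2 + 1) / (α ^ 2 + 1)) := by
          ring
        rw [e]
        exact (div_le_div_iff_of_pos_right hs).2 h
      · filter_upwards [eventually_ge_atTop (α ^ 2 + 1)] with t ht
        have hs : (0:ℝ) < Real.sqrt t := Real.sqrt_pos.2 (by nlinarith)
        have h := hup t ht
        have e : (M + 1) + 1 * Real.log (max t (α ^ 2 + 1) / (α ^ 2 + 1))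
            = M + 1 + Real.log (max t (α ^ 2 + 1) / (α ^ 2 + 1)) := by ring
        rw [e]
        exact (div_le_div_iff_of_pos_right hs).2 h
    have key2 : Tendsto (fun t => (w t - c * Real.sqrt t) / Real.sqrt t + c) atTop (𝓝 c) := by
      have := key.add (tendsto_const_nhds (x := c))
      rwa [zero_add] at this
    apply key2.congr'
    filter_upwards [eventually_ge_atTop (1:ℝ)] with t ht
    have hs : (0:ℝ) < Real.sqrt t := Real.sqrt_pos.2 (by linarith)
    field_simp
    ring
  · intro β hβ
    have h1 : (0:ℝ) < 2 + β ^ 2 := by positivity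
    rw [div_le_iff₀ h1]
    nlinarith [sq_nonneg (β - Real.sqrt 2), Real.sqrt_nonneg 2]
  · have h1 : (0:ℝ) < 2 + α ^ 2 := by positivity
    constructor
    · intro h
      rw [div_eq_iff h1.ne'] at h
      nlinarith [sq_nonneg (α - Real.sqrt 2), Real.sqrt_nonneg 2]
    · intro h; subst h; rw [h2]; norm_num
end
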